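/- arXiv:cs/9906024 — 8 statements merged into one kernel-verified Lean document; each statement's English description precedes it below -/
import Mathlib

section
/- Let Σ be a finite set with a distinguished element q, and let δ : Σ → ℂ^Σ be a function. Define the global operator on finitely supported configurations c : ℤ → Σ (with c_i = q for all but finitely many i) by U(d, c) = ∏_{i∈ℤ} δ(c_i)(d_i) (a well-defined product since all but finitely many factors equal δ(q)(q) or vanish), assuming δ(q)(x) = 1 if x = q and 0 otherwise. Then U preserves the ℓ² norm on superpositions of configurations if and only if ‖δ(x)‖ = 1 for all x ∈ Σ and ⟨δ(x), δ(y)⟩ = 0 for all x ≠ y in Σ. -/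
/-!
The global operator factorizes over sites: if the configurations `c, c'` are `q` outside a finite
window `A`, then every `d` with nonzero amplitude is also `q` outside `A`, and summing the products
over the outputs in the window gives `⟪U c', U c⟫ = ∏ i ∈ A, ⟪δ (c' i), δ (c i)⟫`. For orthonormal
`δ` this Gram matrix is the identity. Conversely, on superpositions of configurations supported at
site `0`, `U` is the linear map `e x ↦ δ x`; being an isometry, it sends the standard orthonormal
basis to an orthonormal family.
-/

open Finset ComplexConjugate

section InnerProduct

variable {𝕜 E ι : Type*} [RCLike 𝕜] [NormedAddCommGroup E] [InnerProductSpace 𝕜 E]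

theorem ofReal_norm_sum_smul_sq (s : Finset ι) (a : ι → 𝕜) (v : ι → E) :
    ((‖∑ i ∈ s, a i • v i‖ ^ 2 : ℝ) : 𝕜) =
      ∑ j ∈ s, ∑ i ∈ s, conj (a j) * a i * inner 𝕜 (v j) (v i) := by
  rw [RCLike.ofReal_pow, ← inner_self_eq_norm_sq_to_K, sum_inner]
  simp only [inner_sum, inner_smul_left, inner_smul_right, mul_left_comm, mul_assoc]

theorem orthonormal_of_forall_norm_sum_smul_sq [Fintype ι] {v : ι → E}
    (h : ∀ a : ι → 𝕜, ‖∑ i, a i • v i‖ ^ 2 = ∑ i, ‖a i‖ ^ 2) : Orthonormal 𝕜 v := by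
  classical
  let b := EuclideanSpace.basisFun ι 𝕜
  let T : EuclideanSpace 𝕜 ι →ₗᵢ[𝕜] E :=
    { toLinearMap := b.toBasis.constr 𝕜 v
      norm_map' := fun x => by
        have hx := h x
        rw [← EuclideanSpace.norm_sq_eq] at hx
        simpa [b, Module.Basis.constr_apply_fintype, sq_eq_sq₀] using hx }
  have hTb : ⇑T ∘ ⇑b = v := funext fun i => by simp [T, b]
  simpa only [hTb] using b.orthonormal.comp_linearIsometry T

theorem sum_prod_mul_conj_prod [Fintype ι] [DecidableEq ι] {κ : Type*} [Fintype κ]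
    (u v : ι → EuclideanSpace 𝕜 κ) :
    ∑ g : ι → κ, (∏ i, u i (g i)) * conj (∏ i, v i (g i)) = ∏ i, inner 𝕜 (v i) (u i) := by
  simp only [map_prod, ← prod_mul_distrib, PiLp.inner_apply, RCLike.inner_apply]
  rw [Fintype.prod_sum]

end InnerProduct

abbrev FinConfig {S : Type*} (q : S) : Type _ := {c : ℤ → S // {i | c i ≠ q}.Finite}

namespace FinConfig

variable {S : Type*} {q : S}

def extend (q : S) (A : Finset ℤ) (g : A → S) : FinConfig q :=
  ⟨fun i => if h : i ∈ A then g ⟨i, h⟩ else q,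
    A.finite_toSet.subset fun _ hi => by_contra fun h => hi (dif_neg h)⟩

theorem extend_apply (A : Finset ℤ) (g : A → S) (i : A) : (extend q A g).1 i = g i :=
  dif_pos i.2

theorem support_extend_subset (A : Finset ℤ) (g : A → S) :
    {i | (extend q A g).1 i ≠ q} ⊆ A :=
  fun _ hi => by_contra fun h => hi (dif_neg h)

theorem extend_injective (A : Finset ℤ) : Function.Injective (extend q A) :=
  fun g g' h => funext fun i => by
    simpa only [extend_apply] using congrFun (congrArg Subtype.val h) i.1

theorem mem_range_extend {A : Finset ℤ} {d : FinConfig q} (hd : {i | d.1 i ≠ q} ⊆ A) :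
    d ∈ Set.range (extend q A) := by
  refine ⟨fun i => d.1 i, ?_⟩
  ext i
  by_cases hi : i ∈ A
  · exact dif_pos hi
  · exact (dif_neg hi).trans (not_not.1 fun h => hi (hd h)).symm

def single (q x : S) : FinConfig q := extend q {0} fun _ => x

theorem single_apply_zero (x : S) : (single q x).1 0 = x :=
  extend_apply {0} _ ⟨0, mem_singleton_self 0⟩

theorem single_injective : Function.Injective (single (S := S) q) :=
  fun x y h => by simpa only [single_apply_zero] using congrFun (congrArg Subtype.val h) 0

end FinConfig

section Amplitude

variable {S : Type*} {q : S} {δ : S → EuclideanSpace ℂ S}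

open FinConfig

variable (δ) in
noncomputable def amplitude (d c : FinConfig q) : ℂ := ∏ᶠ i, δ (c.1 i) (d.1 i)

theorem amplitude_eq_prod (hqq : δ q q = 1) {A : Finset ℤ} {d c : FinConfig q}
    (hd : {i | d.1 i ≠ q} ⊆ A) (hc : {i | c.1 i ≠ q} ⊆ A) :
    amplitude δ d c = ∏ i ∈ A, δ (c.1 i) (d.1 i) := by
  refine finprod_eq_prod_of_mulSupport_subset _ fun i hi => by_contra fun hiA => hi ?_
  change δ (c.1 i) (d.1 i) = 1
  rw [not_not.1 fun h => hiA (hc h), not_not.1 fun h => hiA (hd h), hqq]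

theorem amplitude_extend (hqq : δ q q = 1) {A : Finset ℤ} (g : A → S) {c : FinConfig q}
    (hc : {i | c.1 i ≠ q} ⊆ A) :
    amplitude δ (extend q A g) c = ∏ i : A, δ (c.1 i) (g i) := by
  rw [amplitude_eq_prod hqq (support_extend_subset A g) hc, ← prod_coe_sort]
  simp only [extend_apply]

theorem amplitude_eq_zero [DecidableEq S] (hq : ∀ x, δ q x = if x = q then 1 else 0)
    {d c : FinConfig q} {i : ℤ} (hd : d.1 i ≠ q) (hc : c.1 i = q) : amplitude δ d c = 0 := by
  classical
  have hqq : δ q q = 1 := by rw [hq, if_pos rfl]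
  rw [amplitude_eq_prod (A := insert i (d.2.toFinset ∪ c.2.toFinset)) hqq
    (fun j hj => mem_insert_of_mem (mem_union_left _ (d.2.mem_toFinset.2 hj)))
    (fun j hj => mem_insert_of_mem (mem_union_right _ (c.2.mem_toFinset.2 hj)))]
  exact prod_eq_zero (mem_insert_self _ _) (by rw [hc, hq, if_neg hd])

theorem tsum_norm_sq_sum_amplitude [Fintype S] [DecidableEq S]
    (hq : ∀ x, δ q x = if x = q then 1 else 0)
    (s : Finset (FinConfig q)) (a : FinConfig q → ℂ) {A : Finset ℤ}
    (hs : ∀ c ∈ s, {i | c.1 i ≠ q} ⊆ A) :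
    ((∑' d, ‖∑ c ∈ s, a c * amplitude δ d c‖ ^ 2 : ℝ) : ℂ) =
      ∑ c' ∈ s, ∑ c ∈ s, conj (a c') * a c * ∏ i ∈ A, inner ℂ (δ (c'.1 i)) (δ (c.1 i)) := by
  classical
  have hqq : δ q q = 1 := by rw [hq, if_pos rfl]
  have hsupp : (Function.support fun d : FinConfig q => ‖∑ c ∈ s, a c * amplitude δ d c‖ ^ 2) ⊆
      Set.range (extend q A) := by
    refine fun d hd => mem_range_extend fun i hi => by_contra fun hiA => hd ?_
    have hzero : ∀ c ∈ s, amplitude δ d c = 0 :=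
      fun c hc => amplitude_eq_zero hq hi (not_not.1 fun h => hiA (hs c hc h))
    change ‖∑ c ∈ s, a c * amplitude δ d c‖ ^ 2 = 0
    rw [sum_eq_zero (f := fun c => a c * amplitude δ d c) fun c hc => by rw [hzero c hc, mul_zero],
      norm_zero, zero_pow two_ne_zero]
  rw [← (extend_injective A).tsum_eq hsupp, tsum_fintype, Complex.ofReal_sum]
  calc ∑ g, ((‖∑ c ∈ s, a c * amplitude δ (extend q A g) c‖ ^ 2 : ℝ) : ℂ)
      = ∑ g : A → S, ∑ c' ∈ s, ∑ c ∈ s, conj (a c') * a c *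
          ((∏ i : A, δ (c.1 i) (g i)) * conj (∏ i : A, δ (c'.1 i) (g i))) := by
        refine sum_congr rfl fun g _ => ?_
        rw [sum_congr rfl fun c hc => by rw [amplitude_extend hqq g (hs c hc)]]
        push_cast
        rw [← Complex.mul_conj', map_sum, sum_mul_sum, sum_comm]
        refine sum_congr rfl fun c' _ => sum_congr rfl fun c _ => ?_
        rw [map_mul]
        ring
    _ = ∑ c' ∈ s, ∑ c ∈ s, conj (a c') * a c * ∏ i ∈ A, inner ℂ (δ (c'.1 i)) (δ (c.1 i)) := by
        rw [sum_comm]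
        refine sum_congr rfl fun c' _ => ?_
        rw [sum_comm]
        refine sum_congr rfl fun c _ => ?_
        rw [← mul_sum, sum_prod_mul_conj_prod,
          prod_coe_sort A fun i => inner ℂ (δ (c'.1 i)) (δ (c.1 i))]

theorem tsum_norm_sq_sum_amplitude_of_finsupp
    (H : ∀ f : FinConfig q →₀ ℂ, ∑' d, ‖∑ c ∈ f.support, f c * amplitude δ d c‖ ^ 2 =
      ∑ c ∈ f.support, ‖f c‖ ^ 2)
    (s : Finset (FinConfig q)) (a : FinConfig q → ℂ) :
    ∑' d, ‖∑ c ∈ s, a c * amplitude δ d c‖ ^ 2 = ∑ c ∈ s, ‖a c‖ ^ 2 := by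
  let f := Finsupp.indicator s fun c _ => a c
  have hsub : f.support ⊆ s := Finsupp.support_indicator_subset _ _
  have hf : ∀ c ∈ s, f c = a c := fun c hc => Finsupp.indicator_of_mem hc _
  have hzero : ∀ c ∈ s, c ∉ f.support → f c = 0 := fun c _ h => Finsupp.notMem_support_iff.1 h
  have hamp : ∀ d, ∑ c ∈ f.support, f c * amplitude δ d c = ∑ c ∈ s, a c * amplitude δ d c :=
    fun d => by
      rw [sum_subset hsub fun c hc h => by rw [hzero c hc h, zero_mul]]
      exact sum_congr rfl fun c hc => by rw [hf c hc]
  have hnorm : ∑ c ∈ f.support, ‖f c‖ ^ 2 = ∑ c ∈ s, ‖a c‖ ^ 2 := by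
    rw [sum_subset hsub fun c hc h => by rw [hzero c hc h, norm_zero, zero_pow two_ne_zero]]
    exact sum_congr rfl fun c hc => by rw [hf c hc]
  simpa only [hamp, hnorm] using H f

end Amplitude

section NormPreservation

variable {S : Type*} [Fintype S] {q : S} {δ : S → EuclideanSpace ℂ S}

open FinConfig

theorem prod_inner_self_eq_one (hδ : Orthonormal ℂ δ) (c : FinConfig q) (A : Finset ℤ) :
    ∏ i ∈ A, inner ℂ (δ (c.1 i)) (δ (c.1 i)) = 1 :=
  prod_eq_one fun i _ => by simp [inner_self_eq_norm_sq_to_K, hδ.1]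

theorem prod_inner_eq_zero_of_ne (hδ : Orthonormal ℂ δ) {A : Finset ℤ} {c c' : FinConfig q}
    (hc : {i | c.1 i ≠ q} ⊆ A) (hc' : {i | c'.1 i ≠ q} ⊆ A) (hne : c' ≠ c) :
    ∏ i ∈ A, inner ℂ (δ (c'.1 i)) (δ (c.1 i)) = 0 := by
  obtain ⟨i, hi⟩ : ∃ i, c'.1 i ≠ c.1 i := by
    by_contra! h
    exact hne (Subtype.ext (funext h))
  have hiA : i ∈ A := by
    by_cases hci : c.1 i = q
    · exact hc' fun h => hi (h.trans hci.symm)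
    · exact hc hci
  exact prod_eq_zero hiA (hδ.2 hi)

theorem tsum_norm_sq_sum_amplitude_of_orthonormal [DecidableEq S]
    (hq : ∀ x, δ q x = if x = q then 1 else 0) (hδ : Orthonormal ℂ δ)
    (s : Finset (FinConfig q)) (a : FinConfig q → ℂ) :
    ∑' d, ‖∑ c ∈ s, a c * amplitude δ d c‖ ^ 2 = ∑ c ∈ s, ‖a c‖ ^ 2 := by
  let A : Finset ℤ := s.sup fun c => c.2.toFinset
  have hs : ∀ c ∈ s, {i | c.1 i ≠ q} ⊆ A :=
    fun c hc _ hi => le_sup (f := fun c : FinConfig q => c.2.toFinset) hc (c.2.mem_toFinset.2 hi)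
  apply Complex.ofReal_injective
  rw [tsum_norm_sq_sum_amplitude hq s a hs, Complex.ofReal_sum]
  refine sum_congr rfl fun c' hc' => ?_
  rw [sum_eq_single c' (fun c hc hne => by
      rw [prod_inner_eq_zero_of_ne hδ (hs c hc) (hs c' hc') hne.symm, mul_zero])
    (absurd hc'), prod_inner_self_eq_one hδ, mul_one, mul_comm, Complex.mul_conj']
  push_cast
  rfl

theorem orthonormal_of_tsum_norm_sq_sum_amplitude [DecidableEq S]
    (hq : ∀ x, δ q x = if x = q then 1 else 0)
    (H : ∀ (s : Finset (FinConfig q)) (a : FinConfig q → ℂ),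
      ∑' d, ‖∑ c ∈ s, a c * amplitude δ d c‖ ^ 2 = ∑ c ∈ s, ‖a c‖ ^ 2) :
    Orthonormal ℂ δ := by
  refine orthonormal_of_forall_norm_sum_smul_sq fun a => Complex.ofReal_injective ?_
  let s := univ.map ⟨single q, single_injective⟩
  have hs : ∀ c ∈ s, {i | c.1 i ≠ q} ⊆ ({0} : Finset ℤ) := by
    simpa [s, single] using fun x => support_extend_subset (q := q) {0} fun _ => x
  calc ((‖∑ x, a x • δ x‖ ^ 2 : ℝ) : ℂ)
      = ∑ y, ∑ x, conj (a y) * a x * inner ℂ (δ y) (δ x) := ofReal_norm_sum_smul_sq _ _ _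
    _ = ((∑' d, ‖∑ c ∈ s, a (c.1 0) * amplitude δ d c‖ ^ 2 : ℝ) : ℂ) := by
        rw [tsum_norm_sq_sum_amplitude hq s _ hs]
        simp [s, single_apply_zero]
    _ = ((∑ x, ‖a x‖ ^ 2 : ℝ) : ℂ) := by
        rw [H s]
        simp [s, single_apply_zero]

end NormPreservation

/-- For a trivial LQCA (neighborhood `N = (0)`), the global evolution operator
`U(d,c) = ∏_{i∈ℤ} δ(c_i)(d_i)` preserves the `ℓ²` norm of (finitely supported)
superpositions of configurations iff every `δ(x)` has unit norm and
`δ(x) ⊥ δ(y)` whenever `x ≠ y`. -/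
theorem trivial_lqca_well_formed_iff {S : Type*} [Fintype S] [DecidableEq S] (q : S)
    (δ : S → EuclideanSpace ℂ S)
    (hq : ∀ x, δ q x = if x = q then 1 else 0) :
    (∀ f : {c : ℤ → S // {i | c i ≠ q}.Finite} →₀ ℂ,
        (∑' d : {c : ℤ → S // {i | c i ≠ q}.Finite},
            ‖∑ c ∈ f.support, f c * ∏ᶠ i : ℤ, δ (c.1 i) (d.1 i)‖ ^ 2)
          = ∑ c ∈ f.support, ‖f c‖ ^ 2)
      ↔ ((∀ x, ‖δ x‖ = 1) ∧ ∀ x y, x ≠ y → inner (𝕜 := ℂ) (δ x) (δ y) = 0) :=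
  ⟨fun H => orthonormal_of_tsum_norm_sq_sum_amplitude hq
      (tsum_norm_sq_sum_amplitude_of_finsupp H),
    fun hδ f => tsum_norm_sq_sum_amplitude_of_orthonormal hq hδ f.support f⟩
end

section
/- Let Σ = {q, p} and define δ : Σ×Σ → ℂ^Σ by δ(q,q) = |q⟩, δ(q,p) = (1/2)|q⟩, δ(p,q) = 2|p⟩, δ(p,p) = |p⟩, where |x⟩ denotes the indicator vector of x. For finitely supported configurations c, d : ℤ → Σ (equal to q outside a finite set), define U(d,c) = ∏_{i∈ℤ} δ(c_i, c_{i+1})(d_i). Then U(d,c) = 1 if c = d and U(d,c) = 0 otherwise; i.e., the time evolution operator is the identity. -/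
open scoped Classical

/-!
On the diagonal the local rule is a coboundary: `δ(x, y)(x) = w x / w y` with `w q = 1`,
`w p = 2`, so `U(c, c)` telescopes to `1`. Off the diagonal, `δ(x, y)` is supported on `x`, so
the factor at a site where `c` and `d` differ vanishes.
-/

open Function

theorem finprod_div_comp_add_eq_one {ι G : Type*} [AddGroup ι] [CommGroupWithZero G] {f : ι → G}
    (hf : HasFiniteMulSupport f) (hf₀ : ∀ i, f i ≠ 0) (a : ι) :
    ∏ᶠ i, f i / f (i + a) = 1 := by
  have hshift : HasFiniteMulSupport fun i => f (i + a) :=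
    hf.fun_comp_of_injective (add_left_injective a)
  have hreindex : ∏ᶠ i, f (i + a) = ∏ᶠ i, f i := finprod_comp_equiv (Equiv.addRight a)
  rw [finprod_div_distrib hf hshift, hreindex, div_self (finprod_ne_zero hf₀)]

theorem hasFiniteMulSupport_localRule {α M : Type*} [One M] {δ : α × α → α → M} {a : α}
    (ha : δ (a, a) a = 1) {c d : ℤ → α} (hc : {i | c i ≠ a}.Finite)
    (hd : {i | d i ≠ a}.Finite) :
    HasFiniteMulSupport fun i => δ (c i, c (i + 1)) (d i) := by
  have hc' : {i | c (i + 1) ≠ a}.Finite := hc.preimage (add_left_injective 1).injOn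
  refine ((hc.union hc').union hd).subset fun i hi => ?_
  contrapose! hi
  simp_all

noncomputable def ruleB : Bool × Bool → Bool → ℂ
  | (false, false) => fun x => if x = false then 1 else 0
  | (false, true) => fun x => if x = false then 1 / 2 else 0
  | (true, false) => fun x => if x = true then 2 else 0
  | (true, true) => fun x => if x = true then 1 else 0

def weightB (x : Bool) : ℂ := if x then 2 else 1

theorem weightB_ne_zero (x : Bool) : weightB x ≠ 0 := by
  cases x <;> norm_num [weightB]

theorem ruleB_self (x y : Bool) : ruleB (x, y) x = weightB x / weightB y := by
  cases x <;> cases y <;> norm_num [ruleB, weightB]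

theorem ruleB_of_ne {x y z : Bool} (h : z ≠ x) : ruleB (x, y) z = 0 := by
  cases x <;> cases y <;> simp_all [ruleB]

/-- The example LQCA `B` over `Σ = {q, p}` (here `q = false`, `p = true`) with
neighborhood `(0,1)` and local rule `δ(q,q) = |q⟩`, `δ(q,p) = ½|q⟩`,
`δ(p,q) = 2|p⟩`, `δ(p,p) = |p⟩` has time evolution operator equal to the
identity: `U(d,c) = 1` if `c = d` and `0` otherwise. -/
theorem example_lqca_identity
    (δ : Bool × Bool → Bool → ℂ)
    (hqq : δ (false, false) = fun x => if x = false then 1 else 0)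
    (hqp : δ (false, true) = fun x => if x = false then 1/2 else 0)
    (hpq : δ (true, false) = fun x => if x = true then 2 else 0)
    (hpp : δ (true, true) = fun x => if x = true then 1 else 0)
    (c d : ℤ → Bool)
    (hc : {i | c i ≠ false}.Finite) (hd : {i | d i ≠ false}.Finite) :
    (∏ᶠ i : ℤ, δ (c i, c (i + 1)) (d i)) = if c = d then 1 else 0 := by
  obtain rfl : δ = ruleB := by
    funext ⟨x, y⟩
    cases x <;> cases y <;> assumption
  split_ifs with hcd
  · subst hcd
    have hw : HasFiniteMulSupport fun i => weightB (c i) :=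
      hc.subset fun i hi => by simp_all [weightB]
    calc ∏ᶠ i, ruleB (c i, c (i + 1)) (c i)
        = ∏ᶠ i, weightB (c i) / weightB (c (i + 1)) := finprod_congr fun i => ruleB_self _ _
      _ = 1 := finprod_div_comp_add_eq_one hw (fun i => weightB_ne_zero _) 1
  · obtain ⟨j, hj⟩ := Function.ne_iff.mp hcd
    exact finprod_eq_zero _ j (ruleB_of_ne (Ne.symm hj))
      (hasFiniteMulSupport_localRule (by rfl) hc hd)
end

section
/- Let Σ be a finite set with quiescent state q, r ≥ 1, N = (a_1,…,a_r) a strictly increasing sequence of integers, and δ : Σ^r → ℂ^Σ a local transition function with δ(q,…,q) equal to the indicator of q and ‖δ(w)‖ > 0 for all w. Define δ'(w) = δ(w)/‖δ(w)‖. If the time evolution operator U_A associated with δ preserves the ℓ² norm (equivalently, every column U_A(·,c) has unit norm), then the time evolution operator U_{A'} associated with δ' equals U_A. -/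
/-!
Write `f i = δ(c_{i+N})` for the local rule at cell `i`; outside a finite set `K` of cells it is
the indicator of `q`. Summing `∏ᶠ i, |f i (d i)|²` over all configurations `d` factorises as
`∏_{i ∈ K} ∑_s |f i s|² = ∏_{i ∈ K} ‖f i‖²`, so unit columns force `∏_{i ∈ K} ‖f i‖ = 1`, and
renormalizing multiplies every entry of the column by the inverse of exactly this product.
-/

open Function

abbrev FiniteConfig (ι S : Type*) (q : S) := {c : ι → S // {i | c i ≠ q}.Finite}

namespace FiniteConfig

variable {ι S : Type*} [DecidableEq ι] (K : Finset ι) (q : S)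

def extend (v : K → S) : FiniteConfig ι S q :=
  ⟨fun i => if h : i ∈ K then v ⟨i, h⟩ else q,
    K.finite_toSet.subset fun i hi => by by_contra h; simp_all⟩

@[simp]
theorem extend_apply_coe (v : K → S) (i : K) : (extend K q v).1 i = v i := by
  simp [extend]

@[simp]
theorem extend_apply_of_notMem (v : K → S) {i : ι} (hi : i ∉ K) : (extend K q v).1 i = q := by
  simp [extend, hi]

theorem extend_injective : Injective (extend K q) := fun v w hvw =>
  funext fun i => by simpa using congrArg (fun e => e.1 i.1) hvw

end FiniteConfig

section
variable {ι S : Type*} [DecidableEq S] {q : S}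

theorem mulSupport_apply_subset {M : Type*} [Zero M] [One M] {g : ι → S → M} {K : Finset ι}
    (hK : ∀ i ∉ K, ∀ s, g i s = if s = q then 1 else 0) (d : ι → S) :
    mulSupport (fun i => g i (d i)) ⊆ ↑K ∪ {i | d i ≠ q} := by
  intro i hi
  by_contra h
  simp only [Set.mem_union, Finset.mem_coe, Set.mem_ofPred_eq, not_or, not_not] at h
  exact hi (by simp [hK i h.1, h.2])

theorem hasFiniteMulSupport_apply {M : Type*} [Zero M] [One M] {g : ι → S → M} {K : Finset ι}
    (hK : ∀ i ∉ K, ∀ s, g i s = if s = q then 1 else 0) (d : FiniteConfig ι S q) :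
    HasFiniteMulSupport (fun i => g i (d.1 i)) :=
  (K.finite_toSet.union d.2).subset (mulSupport_apply_subset hK d.1)

theorem tsum_finprod_apply {R : Type*} [CommSemiring R] [TopologicalSpace R] [Fintype S]
    {g : ι → S → R} {K : Finset ι} (hK : ∀ i ∉ K, ∀ s, g i s = if s = q then 1 else 0) :
    ∑' d : FiniteConfig ι S q, ∏ᶠ i, g i (d.1 i) = ∏ i ∈ K, ∑ s, g i s := by
  classical
  have hrange : support (fun d : FiniteConfig ι S q => ∏ᶠ i, g i (d.1 i)) ⊆
      Set.range (FiniteConfig.extend K q) := by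
    intro d hd
    by_contra hout
    obtain ⟨i, hiK, hdi⟩ : ∃ i ∉ K, d.1 i ≠ q := by
      by_contra! h
      exact hout ⟨fun i => d.1 i, Subtype.ext <| funext fun i => by
        by_cases hi : i ∈ K
        · exact FiniteConfig.extend_apply_coe K q _ ⟨i, hi⟩
        · simp [hi, h]⟩
    exact hd (finprod_eq_zero _ i (by simp [hK i hiK, hdi]) (hasFiniteMulSupport_apply hK d))
  have hextend (v : K → S) :
      ∏ᶠ i, g i ((FiniteConfig.extend K q v).1 i) = ∏ i : K, g i (v i) := by
    rw [finprod_eq_prod_of_mulSupport_subset _ (s := K), ← Finset.prod_coe_sort]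
    · simp
    · refine (mulSupport_apply_subset hK _).trans fun i hi => ?_
      rcases hi with hi | hi
      · exact hi
      · by_contra h
        exact hi (FiniteConfig.extend_apply_of_notMem K q v h)
  rw [← (FiniteConfig.extend_injective K q).tsum_eq hrange, tsum_fintype,
    ← Finset.prod_coe_sort, Fintype.prod_sum]
  exact Finset.sum_congr rfl fun v _ => hextend v

end

section
variable {ι S 𝕜 : Type*} [DecidableEq S] [Fintype S] [RCLike 𝕜] {q : S}
  {f : ι → EuclideanSpace 𝕜 S} {K : Finset ι}

theorem tsum_norm_finprod_apply_sq (hK : ∀ i ∉ K, ∀ s, f i s = if s = q then 1 else 0) :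
    ∑' d : FiniteConfig ι S q, ‖∏ᶠ i, f i (d.1 i)‖ ^ 2 = ∏ i ∈ K, ‖f i‖ ^ 2 := by
  have hsq (d : FiniteConfig ι S q) :
      ‖∏ᶠ i, f i (d.1 i)‖ ^ 2 = ∏ᶠ i, RCLike.normSq (f i (d.1 i)) := by
    rw [← RCLike.normSq_eq_def', map_finprod _ (hasFiniteMulSupport_apply hK d)]
  have hKsq : ∀ i ∉ K, ∀ s, RCLike.normSq (f i s) = if s = q then 1 else 0 := by
    intro i hi s
    rw [hK i hi]
    split_ifs <;> simp
  simp_rw [hsq, tsum_finprod_apply hKsq, EuclideanSpace.norm_sq_eq, RCLike.normSq_eq_def']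

theorem norm_eq_one_of_notMem (hK : ∀ i ∉ K, ∀ s, f i s = if s = q then 1 else 0) {i : ι}
    (hi : i ∉ K) : ‖f i‖ = 1 := by
  have : f i = EuclideanSpace.single q 1 := by
    ext s
    simp [hK i hi]
  simp [this]

theorem finprod_inv_norm_smul_apply (hK : ∀ i ∉ K, ∀ s, f i s = if s = q then 1 else 0)
    (hunit : ∏ i ∈ K, ‖f i‖ = 1) (d : FiniteConfig ι S q) :
    ∏ᶠ i, ((‖f i‖ : 𝕜)⁻¹ • f i) (d.1 i) = ∏ᶠ i, f i (d.1 i) := by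
  have hsupp : mulSupport (fun i => (‖f i‖ : 𝕜)⁻¹) ⊆ K := fun i hi => by
    by_contra h
    exact hi (by simp [norm_eq_one_of_notMem hK h])
  calc ∏ᶠ i, ((‖f i‖ : 𝕜)⁻¹ • f i) (d.1 i)
      = ∏ᶠ i, (‖f i‖ : 𝕜)⁻¹ * f i (d.1 i) := rfl
    _ = (∏ᶠ i, (‖f i‖ : 𝕜)⁻¹) * ∏ᶠ i, f i (d.1 i) :=
        finprod_mul_distrib (K.finite_toSet.subset hsupp) (hasFiniteMulSupport_apply hK d)
    _ = ∏ᶠ i, f i (d.1 i) := by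
        rw [finprod_eq_prod_of_mulSupport_subset _ hsupp, Finset.prod_inv_distrib,
          ← RCLike.ofReal_prod, hunit]
        simp

end

theorem finite_setOf_window_ne {G J S : Type*} [Add G] [IsRightCancelAdd G] [Finite J] {q : S}
    (c : FiniteConfig G S q) (N : J → G) :
    {i | (fun j => c.1 (i + N j)) ≠ fun _ => q}.Finite :=
  (Set.finite_iUnion fun j => c.2.preimage (add_left_injective (N j)).injOn).subset
    fun _ hi => Set.mem_iUnion.2 (Function.ne_iff.1 hi)

theorem renormalized_rule_same_evolution_general {S : Type*} [Fintype S] [DecidableEq S]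
    (q : S) {r : ℕ} (N : Fin r → ℤ)
    (δ : (Fin r → S) → EuclideanSpace ℂ S)
    (hq : ∀ x, δ (fun _ => q) x = if x = q then 1 else 0)
    (hnorm : ∀ c : {c : ℤ → S // {i | c i ≠ q}.Finite},
        (∑' d : {c : ℤ → S // {i | c i ≠ q}.Finite},
            ‖∏ᶠ i : ℤ, δ (fun j => c.1 (i + N j)) (d.1 i)‖ ^ 2) = 1) :
    ∀ d c : {c : ℤ → S // {i | c i ≠ q}.Finite},
      (∏ᶠ i : ℤ, ((‖δ (fun j => c.1 (i + N j))‖ : ℂ)⁻¹ •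
          δ (fun j => c.1 (i + N j))) (d.1 i))
        = ∏ᶠ i : ℤ, δ (fun j => c.1 (i + N j)) (d.1 i) := by
  intro d c
  set K := (finite_setOf_window_ne c N).toFinset
  have hK : ∀ i ∉ K, ∀ s, δ (fun j => c.1 (i + N j)) s = if s = q then 1 else 0 := by
    intro i hi s
    rw [Set.Finite.mem_toFinset] at hi
    rw [not_not.1 hi, hq]
  have hunit : ∏ i ∈ K, ‖δ (fun j => c.1 (i + N j))‖ = 1 := by
    have hsq := (tsum_norm_finprod_apply_sq hK).symm.trans (hnorm c)
    rw [Finset.prod_pow] at hsq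
    exact (pow_eq_one_iff_of_nonneg (K.prod_nonneg fun _ _ => norm_nonneg _) two_ne_zero).1 hsq
  exact finprod_inv_norm_smul_apply hK hunit d

/-- Renormalizing the local transition function of a well-formed LQCA does not
change the time evolution operator: if every column of `U_A` has unit norm,
then the operator induced by `δ'(w) = δ(w)/‖δ(w)‖` equals `U_A`. -/
theorem renormalized_rule_same_evolution {S : Type*} [Fintype S] [DecidableEq S]
    (q : S) {r : ℕ} (hr : 1 ≤ r) (N : Fin r → ℤ) (hN : StrictMono N)
    (δ : (Fin r → S) → EuclideanSpace ℂ S)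
    (hq : ∀ x, δ (fun _ => q) x = if x = q then 1 else 0)
    (hpos : ∀ w, 0 < ‖δ w‖)
    (hnorm : ∀ c : {c : ℤ → S // {i | c i ≠ q}.Finite},
        (∑' d : {c : ℤ → S // {i | c i ≠ q}.Finite},
            ‖∏ᶠ i : ℤ, δ (fun j => c.1 (i + N j)) (d.1 i)‖ ^ 2) = 1) :
    ∀ d c : {c : ℤ → S // {i | c i ≠ q}.Finite},
      (∏ᶠ i : ℤ, ((‖δ (fun j => c.1 (i + N j))‖ : ℂ)⁻¹ •
          δ (fun j => c.1 (i + N j))) (d.1 i))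
        = ∏ᶠ i : ℤ, δ (fun j => c.1 (i + N j)) (d.1 i) :=
  renormalized_rule_same_evolution_general q N δ hq hnorm
end

section
/- Let A = (Σ, q, N, δ) be a linear quantum cellular automaton with neighborhood N = (a_1,…,a_r) and time evolution U_A(d,c) = ∏_{i∈ℤ} [δ(c_{i+N})](d_i) on finitely supported configurations. For configurations c, c' and any finite interval I of ℤ containing the extensions of the interval domains of both c and c' (i.e., containing [min supp(c) − a_r, max supp(c) − a_1] and the analogous interval for c'), the inner product of the corresponding columns satisfies ⟨U_A(·,c), U_A(·,c')⟩ = ∏_{i∈I} ⟨δ(c_{i+N}), δ(c'_{i+N})⟩. -/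
/-!
Off the interval `I` both local images are the basis vector at `q`, so a column entry
`∏ᶠ i, δ(c_{i+N})(d_i)` vanishes unless `d` is quiescent off `I`, and is then a finite product
over `I`. The sum over all configurations thus becomes a sum over the states on `I`, that is over
`I → Σ`, and the sum of products splits into the product over `I` of the local inner products.
-/

open Finset

section ProductColumns

variable {ι S M : Type*} {q : S} {I : Finset ι}

theorem finprod_eq_prod_of_quiescent_off [CommMonoidWithZero M] [DecidableEq S] {f : ι → S → M}
    (hf : ∀ i ∉ I, ∀ s, f i s = if s = q then 1 else 0)
    {d : ι → S} (hdI : ∀ i ∉ I, d i = q) :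
    ∏ᶠ i, f i (d i) = ∏ i ∈ I, f i (d i) := by
  refine finprod_eq_prod_of_mulSupport_subset _ fun i hi => ?_
  by_contra hiI
  exact hi (by simp [hf i hiI, hdI i hiI])

theorem finprod_eq_zero_of_ne_quiescent_off [CommMonoidWithZero M] [DecidableEq S]
    {f : ι → S → M}
    (hf : ∀ i ∉ I, ∀ s, f i s = if s = q then 1 else 0)
    {d : ι → S} (hd : {i | d i ≠ q}.Finite) {i₀ : ι} (hi₀I : i₀ ∉ I) (hi₀ : d i₀ ≠ q) :
    ∏ᶠ i, f i (d i) = 0 := by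
  classical
  -- `hd` matters: a `finprod` with infinite `mulSupport` is `1`
  have hsupp : Function.mulSupport (fun i => f i (d i)) ⊆ ↑(I ∪ hd.toFinset) := by
    intro i hi
    by_contra h
    simp only [coe_union, Set.mem_union, mem_coe, Set.Finite.mem_toFinset, Set.mem_ofPred_eq,
      not_or, not_not] at h
    exact hi (by simp [hf i h.1, h.2])
  rw [finprod_eq_prod_of_mulSupport_subset _ hsupp]
  exact prod_eq_zero (i := i₀) (by simp [hi₀]) (by simp [hf i₀ hi₀I, hi₀])

def quiescentOffEquivPi [DecidableEq ι] (q : S) (I : Finset ι) :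
    {d : {c : ι → S // {i | c i ≠ q}.Finite} // ∀ i ∉ I, d.1 i = q} ≃ (I → S) where
  toFun d i := d.1.1 i
  invFun g := ⟨⟨fun i => if h : i ∈ I then g ⟨i, h⟩ else q,
    I.finite_toSet.subset fun i hi => by_contra fun h => hi (dif_neg h)⟩,
    fun _ hi => dif_neg hi⟩
  left_inv d := by
    ext i
    by_cases h : i ∈ I
    · simp [h]
    · simp [h, d.2 i h]
  right_inv g := by
    ext i
    simp

@[simp]
theorem quiescentOffEquivPi_symm_apply_coe [DecidableEq ι] (g : I → S) (i : I) :
    ((quiescentOffEquivPi q I).symm g).1.1 i = g i :=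
  dif_pos i.2

theorem tsum_conj_finprod_mul_finprod [Fintype S] [DecidableEq S]
    {u v : ι → EuclideanSpace ℂ S}
    (hu : ∀ i ∉ I, ∀ s, u i s = if s = q then 1 else 0)
    (hv : ∀ i ∉ I, ∀ s, v i s = if s = q then 1 else 0) :
    ∑' d : {c : ι → S // {i | c i ≠ q}.Finite},
        starRingEnd ℂ (∏ᶠ i, u i (d.1 i)) * ∏ᶠ i, v i (d.1 i)
      = ∏ i ∈ I, inner ℂ (u i) (v i) := by
  classical
  set F := fun d : {c : ι → S // {i | c i ≠ q}.Finite} =>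
    starRingEnd ℂ (∏ᶠ i, u i (d.1 i)) * ∏ᶠ i, v i (d.1 i)
  have hsupp : Function.support F ⊆ {d | ∀ i ∉ I, d.1 i = q} := by
    intro d hd
    by_contra h
    simp only [Set.mem_ofPred_eq, not_forall] at h
    obtain ⟨i₀, hi₀I, hi₀⟩ := h
    exact hd (by simp [F, finprod_eq_zero_of_ne_quiescent_off hu d.2 hi₀I hi₀])
  calc ∑' d, F d
      = ∑' d : {d : {c : ι → S // {i | c i ≠ q}.Finite} // ∀ i ∉ I, d.1 i = q}, F d :=
        (tsum_subtype_eq_of_support_subset hsupp).symm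
    _ = ∑ g : I → S, ∏ i : I, starRingEnd ℂ (u i (g i)) * v i (g i) := by
        rw [← (quiescentOffEquivPi q I).symm.tsum_eq, tsum_fintype]
        refine Fintype.sum_congr _ _ fun g => ?_
        have hg := ((quiescentOffEquivPi q I).symm g).2
        simp only [F]
        rw [finprod_eq_prod_of_quiescent_off hu hg, finprod_eq_prod_of_quiescent_off hv hg,
          map_prod, ← prod_mul_distrib, ← prod_coe_sort I]
        simp only [quiescentOffEquivPi_symm_apply_coe]
    _ = ∏ i : I, ∑ s, starRingEnd ℂ (u i s) * v i s := by rw [Fintype.prod_sum]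
    _ = ∏ i ∈ I, inner ℂ (u i) (v i) := by
        conv_rhs => rw [← prod_coe_sort]
        exact Fintype.prod_congr _ _ fun i => by simp [PiLp.inner_apply, mul_comm]

end ProductColumns

theorem column_inner_eq_prod_general {S : Type*} [Fintype S] [DecidableEq S]
    (q : S) {r : ℕ} (N : Fin r → ℤ)
    (δ : (Fin r → S) → EuclideanSpace ℂ S)
    (hq : ∀ x, δ (fun _ => q) x = if x = q then 1 else 0)
    (c c' : {c : ℤ → S // {i | c i ≠ q}.Finite}) (a b : ℤ)
    (hI : ∀ i : ℤ, i ∉ Finset.Icc a b →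
        (∀ j, c.1 (i + N j) = q) ∧ (∀ j, c'.1 (i + N j) = q)) :
    (∑' d : {c : ℤ → S // {i | c i ≠ q}.Finite},
        (starRingEnd ℂ) (∏ᶠ i : ℤ, δ (fun j => c.1 (i + N j)) (d.1 i)) *
          ∏ᶠ i : ℤ, δ (fun j => c'.1 (i + N j)) (d.1 i))
      = ∏ i ∈ Finset.Icc a b,
          inner (𝕜 := ℂ) (δ fun j => c.1 (i + N j)) (δ fun j => c'.1 (i + N j)) := by
  have local_image_quiescent : ∀ e : ℤ → S, (∀ i ∉ Icc a b, ∀ j, e (i + N j) = q) →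
      ∀ i ∉ Icc a b, ∀ s, δ (fun j => e (i + N j)) s = if s = q then 1 else 0 := by
    intro e he i hi s
    rw [show (fun j => e (i + N j)) = fun _ => q from funext (he i hi), hq]
  exact tsum_conj_finprod_mul_finprod
    (local_image_quiescent c.1 fun i hi => (hI i hi).1)
    (local_image_quiescent c'.1 fun i hi => (hI i hi).2)

/-- Lemma 1: the inner product of two columns of the time evolution operator of
an LQCA equals the finite product of the inner products of the local images,
over any finite interval `I = [a,b]` outside of which both configurations have
quiescent neighborhoods (in particular any interval containing the extensions
of the interval domains of `c` and `c'`). -/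
theorem column_inner_eq_prod {S : Type*} [Fintype S] [DecidableEq S]
    (q : S) {r : ℕ} (hr : 1 ≤ r) (N : Fin r → ℤ) (hN : StrictMono N)
    (δ : (Fin r → S) → EuclideanSpace ℂ S)
    (hq : ∀ x, δ (fun _ => q) x = if x = q then 1 else 0)
    (c c' : {c : ℤ → S // {i | c i ≠ q}.Finite}) (a b : ℤ)
    (hI : ∀ i : ℤ, i ∉ Finset.Icc a b →
        (∀ j, c.1 (i + N j) = q) ∧ (∀ j, c'.1 (i + N j) = q)) :
    (∑' d : {c : ℤ → S // {i | c i ≠ q}.Finite},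
        (starRingEnd ℂ) (∏ᶠ i : ℤ, δ (fun j => c.1 (i + N j)) (d.1 i)) *
          ∏ᶠ i : ℤ, δ (fun j => c'.1 (i + N j)) (d.1 i))
      = ∏ i ∈ Finset.Icc a b,
          inner (𝕜 := ℂ) (δ fun j => c.1 (i + N j)) (δ fun j => c'.1 (i + N j)) :=
  column_inner_eq_prod_general q N δ hq c c' a b hI
end

section
/- Let Σ be a finite set with quiescent state q, r ≥ 2, and δ : Σ^r → ℂ^Σ the local rule of a simple LQCA A (neighborhood an interval of length r). Define the weighted de Bruijn graph G_A with vertex set Σ^{r−1}, edges (xz, zy) for x,y ∈ Σ, z ∈ Σ^{r−2}, and weight w(xz, zy) = ‖δ(xzy)‖. Then every column U_A(·,c) of the time evolution operator has unit norm if and only if every cycle in G_A starting and ending at the vertex q^{r−1} has total weight (product of edge weights along the cycle) equal to 1. -/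
/-! Since `δ (q^r)` is the indicator of `q`, a configuration `d` contributes to the column of `c`
only if `d = q` at every site whose window in `c` is quiescent; on the remaining finitely many sites
the sum over `d` factorises, so the norm of the column of `c` is the product of the norms
`‖δ (window)‖` over the non-quiescent windows of `c`. Reading these windows from left to right
is a `q`-cycle of the de Bruijn graph with exactly this weight, and every `q`-cycle arises
from the configuration it spells. -/

open Finset

section FiniteConfigurations

variable {ι S 𝕜 : Type*} [DecidableEq S] [RCLike 𝕜]

lemma finprod_apply_eq_prod_of_eq_off (q : S) (v : ι → EuclideanSpace 𝕜 S) (I : Finset ι)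
    (hv : ∀ i ∉ I, ∀ s, v i s = if s = q then 1 else 0)
    (d : ι → S) (hd : ∀ i ∉ I, d i = q) :
    ∏ᶠ i, v i (d i) = ∏ i ∈ I, v i (d i) := by
  refine finprod_eq_prod_of_mulSupport_subset _ fun i hi => ?_
  by_contra hiI
  exact hi (by simp [hv i hiI, hd i hiI])

lemma finprod_apply_eq_zero (q : S) (v : ι → EuclideanSpace 𝕜 S) (I : Finset ι)
    (hv : ∀ i ∉ I, ∀ s, v i s = if s = q then 1 else 0)
    (d : ι → S) (hd : {i | d i ≠ q}.Finite) {i₀ : ι} (hi₀ : i₀ ∉ I) (hdi₀ : d i₀ ≠ q) :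
    ∏ᶠ i, v i (d i) = 0 := by
  classical
  have hsub : Function.mulSupport (fun i => v i (d i)) ⊆ ↑(I ∪ hd.toFinset) := by
    intro i hi
    by_contra hiI
    simp only [coe_union, Set.Finite.coe_toFinset, Set.mem_union, mem_coe, Set.mem_ofPred_eq,
      not_or, not_not] at hiI
    exact hi (by simp [hv i hiI.1, hiI.2])
  rw [finprod_eq_prod_of_mulSupport_subset _ hsub]
  exact prod_eq_zero (mem_union_right _ (hd.mem_toFinset.2 hdi₀)) (by simp [hv i₀ hi₀, hdi₀])

theorem tsum_norm_finprod_sq [Fintype S] (q : S) (v : ι → EuclideanSpace 𝕜 S) (I : Finset ι)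
    (hv : ∀ i ∉ I, ∀ s, v i s = if s = q then 1 else 0) :
    ∑' d : {d : ι → S // {i | d i ≠ q}.Finite}, ‖∏ᶠ i, v i (d.1 i)‖ ^ 2 = ∏ i ∈ I, ‖v i‖ ^ 2 := by
  classical
  let extend : (I → S) → {d : ι → S // {i | d i ≠ q}.Finite} := fun x =>
    ⟨fun i => if h : i ∈ I then x ⟨i, h⟩ else q,
      I.finite_toSet.subset fun i hi => by_contra fun h => hi (dif_neg h)⟩
  have hextend : Function.Injective extend := fun x y hxy => funext fun i => by
    simpa [extend] using congrFun (congrArg Subtype.val hxy) i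
  have hsupp : Function.support (fun d : {d : ι → S // {i | d i ≠ q}.Finite} =>
      ‖∏ᶠ i, v i (d.1 i)‖ ^ 2) ⊆ Set.range extend := by
    intro d hd
    by_contra hrange
    obtain ⟨i₀, hi₀, hdi₀⟩ : ∃ i₀ ∉ I, d.1 i₀ ≠ q := by
      by_contra! h
      exact hrange ⟨fun i => d.1 i, Subtype.ext <| funext fun i => by
        by_cases hi : i ∈ I <;> simp [extend, hi, h]⟩
    exact hd (by simp [finprod_apply_eq_zero q v I hv d.1 d.2 hi₀ hdi₀])
  rw [← hextend.tsum_eq hsupp, tsum_fintype]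
  calc ∑ x : I → S, ‖∏ᶠ i, v i ((extend x).1 i)‖ ^ 2
      = ∑ x : I → S, ∏ i : I, ‖v i (x i)‖ ^ 2 := by
        refine sum_congr rfl fun x _ => ?_
        rw [finprod_apply_eq_prod_of_eq_off q v I hv _ fun i hi => dif_neg hi,
          ← prod_coe_sort, norm_prod, ← prod_pow]
        exact prod_congr rfl fun i _ => by rw [dif_pos i.2]
    _ = ∏ i : I, ∑ s, ‖v i s‖ ^ 2 :=
        (Fintype.prod_sum (ι := I) (κ := fun _ => S) fun i s => ‖v i s‖ ^ 2).symm
    _ = ∏ i : I, ‖v i‖ ^ 2 := prod_congr rfl fun i _ => (EuclideanSpace.norm_sq_eq _).symm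
    _ = ∏ i ∈ I, ‖v i‖ ^ 2 := prod_coe_sort I fun i => ‖v i‖ ^ 2

end FiniteConfigurations

section DeBruijn

variable {S 𝕜 : Type*} [RCLike 𝕜]

lemma exists_bounds_of_finite_ne (q : S) (c : ℤ → S) (hc : {t | c t ≠ q}.Finite) (m : ℕ) :
    ∃ (a : ℤ) (k : ℕ), 1 ≤ k ∧ (∀ t ≤ a + m, c t = q) ∧ ∀ t, a + k ≤ t → c t = q := by
  obtain ⟨lo, hlo⟩ := hc.bddBelow
  obtain ⟨hi, hhi⟩ := hc.bddAbove
  refine ⟨lo - m - 1, (hi - (lo - m - 1)).toNat + 1, by omega, fun t ht => ?_, fun t ht => ?_⟩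
  · by_contra h
    have := hlo h
    omega
  · by_contra h
    have := hhi h
    omega

lemma finite_ne_of_bounds {q : S} {c : ℤ → S} {a b : ℤ} (hlo : ∀ t ≤ a, c t = q)
    (hhi : ∀ t, b ≤ t → c t = q) : {t | c t ≠ q}.Finite :=
  (Set.finite_Icc a b).subset fun t ht => by
    by_contra h
    simp only [Set.mem_Icc, not_and_or, not_le] at h
    rcases h with h | h
    · exact ht (hlo t h.le)
    · exact ht (hhi t h.le)

theorem sqrt_tsum_eq_prod_norm [Fintype S] [DecidableEq S] {r : ℕ} (q : S)
    (δ : (Fin r → S) → EuclideanSpace 𝕜 S)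
    (hq : ∀ x, δ (fun _ => q) x = if x = q then 1 else 0) (c : ℤ → S) (I : Finset ℤ)
    (hI : ∀ i ∉ I, ∀ j : Fin r, c (i + j) = q) :
    √(∑' d : {d : ℤ → S // {i | d i ≠ q}.Finite}, ‖∏ᶠ i, δ (fun j => c (i + j)) (d.1 i)‖ ^ 2)
      = ∏ i ∈ I, ‖δ (fun j => c (i + j))‖ := by
  rw [tsum_norm_finprod_sq q _ I fun i hi => by rw [funext (hI i hi)]; exact hq, prod_pow,
    Real.sqrt_sq (prod_nonneg fun _ _ => norm_nonneg _)]

variable {m k : ℕ}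

def IsDeBruijnPath (p : Fin (k + 1) → Fin (m + 1) → S) : Prop :=
  ∀ i : Fin k, ∀ j : Fin m, p i.castSucc j.succ = p i.succ j.castSucc

noncomputable def pathWeight [Fintype S] (δ : (Fin (m + 2) → S) → EuclideanSpace 𝕜 S)
    (p : Fin (k + 1) → Fin (m + 1) → S) : ℝ :=
  ∏ i : Fin k, ‖δ (Fin.snoc (p i.castSucc) (p i.succ (Fin.last m)))‖

/-- The configuration spelled by a path starting at `q^(m+1)`: vertex `i` contributes its
last letter at site `i + m`. -/
def pathWord (q : S) (p : Fin (k + 1) → Fin (m + 1) → S) (t : ℤ) : S :=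
  if h : m < t ∧ t ≤ k + m then p ⟨(t - m).toNat, by omega⟩ (Fin.last m) else q

lemma isDeBruijnPath_windows (c : ℤ → S) (a : ℤ) :
    IsDeBruijnPath fun (i : Fin (k + 1)) (j : Fin (m + 1)) => c (a + i + j) := by
  intro i j
  simp only [Fin.val_succ, Fin.val_castSucc]
  congr 1
  push_cast
  ring

lemma pathWord_of_le (q : S) (p : Fin (k + 1) → Fin (m + 1) → S) {t : ℤ} (ht : t ≤ m) :
    pathWord q p t = q :=
  dif_neg fun h => by omega

lemma IsDeBruijnPath.apply_eq_pathWord {q : S} {p : Fin (k + 1) → Fin (m + 1) → S}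
    (hp : IsDeBruijnPath p) (h0 : p 0 = fun _ => q) (i : Fin (k + 1)) (j : Fin (m + 1)) :
    p i j = pathWord q p (i + j) := by
  induction i using Fin.induction generalizing j with
  | zero =>
    have := j.isLt
    rw [h0, pathWord_of_le q p (by simp only [Fin.val_zero, Nat.cast_zero, zero_add]; omega)]
  | succ i ih =>
    induction j using Fin.lastCases with
    | last =>
      have := i.isLt
      rw [pathWord, dif_pos (by simp only [Fin.val_succ, Fin.val_last]; push_cast; omega)]
      congr 1
      ext
      simp
    | cast j =>
      rw [← hp, ih]
      congr 1
      simp only [Fin.val_succ, Fin.val_castSucc]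
      push_cast
      ring

lemma IsDeBruijnPath.pathWord_of_ge {q : S} {p : Fin (k + 1) → Fin (m + 1) → S}
    (hp : IsDeBruijnPath p) (h0 : p 0 = fun _ => q) (hlast : p (Fin.last k) = fun _ => q)
    {t : ℤ} (ht : k ≤ t) : pathWord q p t = q := by
  by_cases htk : t ≤ k + m
  · have := hp.apply_eq_pathWord h0 (Fin.last k) ⟨(t - k).toNat, by omega⟩
    rw [hlast] at this
    convert this.symm using 2
    simp only [Fin.val_last]
    omega
  · exact dif_neg fun h => htk h.2

theorem sqrt_tsum_eq_pathWeight [Fintype S] [DecidableEq S] (q : S)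
    (δ : (Fin (m + 2) → S) → EuclideanSpace 𝕜 S)
    (hq : ∀ x, δ (fun _ => q) x = if x = q then 1 else 0) (c : ℤ → S) (a : ℤ) (k : ℕ)
    (hlo : ∀ t ≤ a + m, c t = q) (hhi : ∀ t, a + k ≤ t → c t = q) :
    √(∑' d : {d : ℤ → S // {i | d i ≠ q}.Finite}, ‖∏ᶠ i, δ (fun j => c (i + j)) (d.1 i)‖ ^ 2)
      = pathWeight δ fun (i : Fin (k + 1)) (j : Fin (m + 1)) => c (a + i + j) := by
  have hquiescent :
      ∀ i ∉ univ.image fun i : Fin k => a + i, ∀ j : Fin (m + 2), c (i + j) = q := by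
    intro i hi j
    have := j.isLt
    have hout : i < a ∨ a + k ≤ i := by
      by_contra! h
      exact hi (mem_image.2 ⟨⟨(i - a).toNat, by omega⟩, mem_univ _,
        show a + ((i - a).toNat : ℤ) = i by omega⟩)
    rcases hout with h | h
    · exact hlo _ (by omega)
    · exact hhi _ (by omega)
  rw [sqrt_tsum_eq_prod_norm q δ hq c _ hquiescent,
    prod_image fun i _ j _ h => Fin.ext (by simpa using h)]
  refine prod_congr rfl fun i _ => congrArg (‖δ ·‖) (funext fun j => ?_)
  induction j using Fin.lastCases with
  | last =>
    rw [Fin.snoc_last]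
    simp only [Fin.val_last, Fin.val_succ]
    congr 1
    push_cast
    ring
  | cast j => simp

end DeBruijn

/-- Lemma 3: for a simple LQCA with neighborhood size `r = m + 2 ≥ 2`, every
column of the time evolution operator has unit `ℓ²` norm iff every `q`-cycle of
the weighted de Bruijn graph `G_A` (vertices `Σ^{r-1}`, edge `xz → zy` of
weight `‖δ(xzy)‖`) has weight `1`. -/
theorem unit_columns_iff_qcycles_weight_one {S : Type*} [Fintype S] [DecidableEq S]
    (q : S) (m : ℕ) (δ : (Fin (m + 2) → S) → EuclideanSpace ℂ S)
    (hq : ∀ x, δ (fun _ => q) x = if x = q then 1 else 0) :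
    (∀ c : {c : ℤ → S // {i | c i ≠ q}.Finite},
        Real.sqrt (∑' d : {c : ℤ → S // {i | c i ≠ q}.Finite},
            ‖∏ᶠ i : ℤ, δ (fun j => c.1 (i + (j : ℤ))) (d.1 i)‖ ^ 2) = 1)
      ↔ ∀ (k : ℕ) (p : Fin (k + 1) → (Fin (m + 1) → S)),
          1 ≤ k →
          p 0 = (fun _ => q) →
          p (Fin.last k) = (fun _ => q) →
          (∀ i : Fin k, ∀ j : Fin m,
              p i.castSucc j.succ = p i.succ j.castSucc) →
          (∏ i : Fin k,
              ‖δ (Fin.snoc (p i.castSucc) (p i.succ (Fin.last m)))‖) = 1 := by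
  constructor
  · intro hcol k p _ h0 hlast (hp : IsDeBruijnPath p)
    have hlo : ∀ t ≤ (0 : ℤ) + m, pathWord q p t = q := fun t ht => pathWord_of_le q p (by omega)
    have hhi : ∀ t, (0 : ℤ) + k ≤ t → pathWord q p t = q := fun t ht =>
      hp.pathWord_of_ge h0 hlast (by omega)
    show pathWeight δ p = 1
    calc pathWeight δ p
        = pathWeight δ fun (i : Fin (k + 1)) (j : Fin (m + 1)) => pathWord q p (0 + i + j) := by
          simp only [zero_add, ← hp.apply_eq_pathWord h0]
      _ = _ := (sqrt_tsum_eq_pathWeight q δ hq _ 0 k hlo hhi).symm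
      _ = 1 := hcol ⟨_, finite_ne_of_bounds hlo hhi⟩
  · rintro hcyc ⟨c, hc⟩
    obtain ⟨a, k, hk, hlo, hhi⟩ := exists_bounds_of_finite_ne q c hc m
    rw [sqrt_tsum_eq_pathWeight q δ hq c a k hlo hhi]
    exact hcyc k (fun i j => c (a + i + j)) hk
      (funext fun j => hlo _ (by simp only [Fin.val_zero, Nat.cast_zero, add_zero]; omega))
      (funext fun j => hhi _ (by simp)) (isDeBruijnPath_windows c a)
end

section
/- Let A = (Σ, q, N, δ) be a simple LQCA with |N| = r ≥ 2, and define the product graph H_A with vertex set Σ^{r−1} × Σ^{r−1} and an edge from (x₁z₁, x₂z₂) to (z₁y₁, z₂y₂) whenever ⟨δ(x₁z₁y₁), δ(x₂z₂y₂)⟩ ≠ 0. Then the columns of U_A are pairwise orthogonal (⟨U_A(·,c), U_A(·,c')⟩ = 0 for all distinct configurations c ≠ c') if and only if every cycle in H_A starting and ending at (q^{r−1}, q^{r−1}) has equal first and second coordinate projections (i.e., passes only through diagonal vertices in the sense that the two projected paths in G_A coincide). -/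
/-!
The inner product of two columns factors over the sites,
`⟨U_A(·, c), U_A(·, c')⟩ = ∏ᵢ ⟨δ(c_{i..i+r-1}), δ(c'_{i..i+r-1})⟩`, where all but finitely many
factors are `⟨δ(q^r), δ(q^r)⟩ = 1`. Reading a pair of configurations through a sliding window of
width `r - 1` therefore gives a `q`-cycle of `H_A` whose edges carry exactly the nonzero factors,
and conversely the two projections of a `q`-cycle spell out such a pair of configurations. The
pair is equal exactly when the cycle is diagonal.
-/

namespace LQCA

open Finset Function

variable {S : Type*} {q : S}

variable (q) in
/-- The index set of the rows and columns of `U_A`. -/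
abbrev Config : Type _ := {c : ℤ → S // {i | c i ≠ q}.Finite}

/-- The entry `U_A(d, c)` of the time evolution operator of the LQCA with local rule `δ`. -/
noncomputable def evolutionEntry {n : ℕ} (δ : (Fin n → S) → EuclideanSpace ℂ S) (c d : ℤ → S) :
    ℂ :=
  ∏ᶠ i : ℤ, δ (fun a => c (i + a)) (d i)

/-- An edge `xz → zy` of the de Bruijn graph `G_A` on `Σ^{r-1}`. -/
def IsDeBruijnEdge {m : ℕ} (x y : Fin (m + 1) → S) : Prop :=
  ∀ a : Fin m, x a.succ = y a.castSucc

/-- An edge `(x₁z₁, x₂z₂) → (z₁y₁, z₂y₂)` of the product graph `H_A`. -/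
def IsProductEdge [Fintype S] {m : ℕ} (δ : (Fin (m + 2) → S) → EuclideanSpace ℂ S)
    (x y : (Fin (m + 1) → S) × (Fin (m + 1) → S)) : Prop :=
  IsDeBruijnEdge x.1 y.1 ∧ IsDeBruijnEdge x.2 y.2 ∧
    inner ℂ (δ (Fin.snoc x.1 (y.1 (Fin.last m)))) (δ (Fin.snoc x.2 (y.2 (Fin.last m)))) ≠ 0

variable (q) in
def OrthogonalColumns {n : ℕ} (δ : (Fin n → S) → EuclideanSpace ℂ S) : Prop :=
  ∀ c c' : Config q, c ≠ c' →
    ∑' d : Config q, starRingEnd ℂ (evolutionEntry δ c d) * evolutionEntry δ c' d = 0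

variable (q) in
def DiagonalQCycles [Fintype S] {m : ℕ} (δ : (Fin (m + 2) → S) → EuclideanSpace ℂ S) : Prop :=
  ∀ (k : ℕ) (p : Fin (k + 1) → (Fin (m + 1) → S) × (Fin (m + 1) → S)), 1 ≤ k →
    p 0 = (fun _ => q, fun _ => q) → p (Fin.last k) = (fun _ => q, fun _ => q) →
    (∀ i : Fin k, IsProductEdge δ (p i.castSucc) (p i.succ)) →
    (fun s => (p s).1) = fun s => (p s).2

section ColumnInner

variable [DecidableEq S] {n : ℕ} {δ : (Fin n → S) → EuclideanSpace ℂ S}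

lemma evolutionEntry_eq_prod (hq : ∀ x, δ (fun _ => q) x = if x = q then 1 else 0)
    {c d : ℤ → S} {I : Finset ℤ} (hc : ∀ i ∉ I, (fun a : Fin n => c (i + a)) = fun _ => q)
    (hd : ∀ i ∉ I, d i = q) :
    evolutionEntry δ c d = ∏ i ∈ I, δ (fun a => c (i + a)) (d i) :=
  finprod_eq_prod_of_mulSupport_subset _ fun i hi => by
    by_contra hiI
    exact hi (by simp [hc i hiI, hd i hiI, hq])

lemma evolutionEntry_eq_zero (hq : ∀ x, δ (fun _ => q) x = if x = q then 1 else 0)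
    {c d : ℤ → S} {I : Finset ℤ} (hc : ∀ i ∉ I, (fun a : Fin n => c (i + a)) = fun _ => q)
    (hd : {i | d i ≠ q}.Finite) {j : ℤ} (hjI : j ∉ I) (hdj : d j ≠ q) :
    evolutionEntry δ c d = 0 := by
  refine finprod_eq_zero _ j (by simp [hc j hjI, hq, hdj]) ((I.finite_toSet.union hd).subset ?_)
  intro i hi
  by_contra h
  simp only [Set.mem_union, mem_coe, Set.mem_ofPred_eq, not_or, not_not] at h
  exact hi (by simp [hc i h.1, h.2, hq])

theorem tsum_conj_evolutionEntry_mul_eq_prod_inner [Fintype S]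
    (hq : ∀ x, δ (fun _ => q) x = if x = q then 1 else 0) {c c' : ℤ → S} {I : Finset ℤ}
    (hc : ∀ i ∉ I, (fun a : Fin n => c (i + a)) = fun _ => q)
    (hc' : ∀ i ∉ I, (fun a : Fin n => c' (i + a)) = fun _ => q) :
    ∑' d : Config q, starRingEnd ℂ (evolutionEntry δ c d) * evolutionEntry δ c' d
      = ∏ i ∈ I, inner ℂ (δ (fun a => c (i + a))) (δ (fun a => c' (i + a))) := by
  set F := fun d : Config q => starRingEnd ℂ (evolutionEntry δ c d) * evolutionEntry δ c' d
  let extend : (I → S) → Config q := fun g =>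
    ⟨fun j => if h : j ∈ I then g ⟨j, h⟩ else q,
      I.finite_toSet.subset fun j hj => by by_contra h; exact hj (dif_neg h)⟩
  have extend_outside (g : I → S) : ∀ i ∉ I, (extend g).1 i = q := fun i hi => by
    simp [extend, hi]
  have extend_inj : Injective extend := fun g g' h => funext fun i => by
    simpa [extend] using congr_fun (congr_arg Subtype.val h) i
  -- outside `I` the local rule maps `q^r` to `q`, so only configurations supported in `I` count
  have support_F : support F ⊆ Set.range extend := by
    intro d hd
    by_cases hdI : ∀ i ∉ I, d.1 i = q
    · refine ⟨fun i => d.1 i, Subtype.ext (funext fun j => ?_)⟩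
      by_cases hj : j ∈ I <;> simp [extend, hj, hdI]
    · push Not at hdI
      obtain ⟨j, hjI, hdj⟩ := hdI
      simp [F, evolutionEntry_eq_zero hq hc d.2 hjI hdj] at hd
  rw [← extend_inj.tsum_eq support_F, tsum_fintype]
  calc ∑ g, F (extend g)
      = ∑ g : I → S, ∏ i : I, starRingEnd ℂ (δ (fun a => c (i + a)) (g i)) *
          δ (fun a => c' (i + a)) (g i) := by
        refine sum_congr rfl fun g _ => ?_
        simp only [F, evolutionEntry_eq_prod hq hc (extend_outside g),
          evolutionEntry_eq_prod hq hc' (extend_outside g), map_prod,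
          ← prod_mul_distrib, ← prod_coe_sort I]
        simp [extend]
    _ = ∏ i : I, ∑ s, starRingEnd ℂ (δ (fun a => c (i + a)) s) * δ (fun a => c' (i + a)) s := by
        rw [Fintype.prod_sum]
    _ = ∏ i ∈ I, inner ℂ (δ (fun a => c (i + a))) (δ (fun a => c' (i + a))) := by
        simp only [← prod_coe_sort I, PiLp.inner_apply, RCLike.inner_apply, mul_comm]

theorem tsum_conj_evolutionEntry_mul_eq_prod_fin [Fintype S]
    (hq : ∀ x, δ (fun _ => q) x = if x = q then 1 else 0) {c c' : ℤ → S} (L : ℤ) (k : ℕ)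
    (hc : ∀ i, i < L ∨ L + k ≤ i → (fun a : Fin n => c (i + a)) = fun _ => q)
    (hc' : ∀ i, i < L ∨ L + k ≤ i → (fun a : Fin n => c' (i + a)) = fun _ => q) :
    ∑' d : Config q, starRingEnd ℂ (evolutionEntry δ c d) * evolutionEntry δ c' d
      = ∏ j : Fin k, inner ℂ (δ (fun a => c (L + j + a))) (δ (fun a => c' (L + j + a))) := by
  have outside (i : ℤ) (hi : i ∉ (range k).image fun j : ℕ => L + j) : i < L ∨ L + k ≤ i := by
    by_contra h
    exact hi (mem_image.2 ⟨(i - L).toNat, mem_range.2 (by omega), by omega⟩)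
  rw [tsum_conj_evolutionEntry_mul_eq_prod_inner hq (fun i hi => hc i (outside i hi))
    (fun i hi => hc' i (outside i hi)), prod_image (fun _ _ _ _ h => by simpa using h),
    ← Fin.prod_univ_eq_prod_range]

end ColumnInner

section BlockWord

variable {k m : ℕ} {f : Fin (k + 1) → Fin (m + 1) → S}

lemma apply_eq_apply_of_add_eq (hf : ∀ i : Fin k, IsDeBruijnEdge (f i.castSucc) (f i.succ))
    {s s' : Fin (k + 1)} {a a' : Fin (m + 1)} (h : (s : ℕ) + a = s' + a') : f s a = f s' a' := by
  wlog hle : (s : ℕ) ≤ s' generalizing s s' a a'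
  · exact (this h.symm (by omega)).symm
  have shift (d s a : ℕ) (hs : s + d ≤ k) (ha : a ≤ m) (hda : d ≤ a) :
      f ⟨s, by omega⟩ ⟨a, by omega⟩ = f ⟨s + d, by omega⟩ ⟨a - d, by omega⟩ := by
    induction d with
    | zero => rfl
    | succ d ih =>
      rw [ih (by omega) (by omega)]
      convert hf ⟨s + d, by omega⟩ ⟨a - d - 1, by omega⟩ using 2 <;> ext <;> simp <;> omega
  convert shift (s' - s) s a (by omega) (by omega) (by omega) using 2 <;> ext <;> simp <;> omega

variable (q f) in
/-- The word spelled by a walk `f` in `G_A`. -/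
def blockWord (j : ℤ) : S :=
  if h : 0 ≤ j ∧ j ≤ k then f ⟨j.toNat, by omega⟩ 0 else q

lemma blockWord_finite : {j | blockWord q f j ≠ q}.Finite :=
  (Set.finite_Icc (0 : ℤ) k).subset fun j hj => by
    by_contra h
    exact hj (dif_neg (by simpa [Set.mem_Icc] using h))

lemma apply_eq_blockWord (hf : ∀ i : Fin k, IsDeBruijnEdge (f i.castSucc) (f i.succ))
    (hlast : f (Fin.last k) = fun _ => q) (s : Fin (k + 1)) (a : Fin (m + 1)) :
    f s a = blockWord q f (s + a) := by
  unfold blockWord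
  split_ifs with h
  · exact apply_eq_apply_of_add_eq hf (by simp; omega)
  · rw [apply_eq_apply_of_add_eq hf (s' := Fin.last k) (a' := ⟨s + a - k, by omega⟩)
      (by simp; omega), hlast]

lemma blockWord_window (hf : ∀ i : Fin k, IsDeBruijnEdge (f i.castSucc) (f i.succ))
    (hlast : f (Fin.last k) = fun _ => q) (i : Fin k) :
    (fun a : Fin (m + 2) => blockWord q f (i + a)) =
      Fin.snoc (f i.castSucc) (f i.succ (Fin.last m)) := by
  funext a
  induction a using Fin.lastCases with
  | last => rw [Fin.snoc_last, apply_eq_blockWord hf hlast]; congr 1; simp; ring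
  | cast a => rw [Fin.snoc_castSucc, apply_eq_blockWord hf hlast]; simp

lemma blockWord_window_of_lt_or_le (hf : ∀ i : Fin k, IsDeBruijnEdge (f i.castSucc) (f i.succ))
    (hzero : f 0 = fun _ => q) (hlast : f (Fin.last k) = fun _ => q) {i : ℤ}
    (hi : i < 0 ∨ k ≤ i) :
    (fun a : Fin (m + 2) => blockWord q f (i + a)) = fun _ => q := by
  funext a
  unfold blockWord
  split_ifs with h
  · rcases hi with hi | hi
    · rw [apply_eq_apply_of_add_eq hf (s' := 0) (a' := ⟨(i + a).toNat, by omega⟩) (by simp),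
        hzero]
    · rw [apply_eq_apply_of_add_eq hf (s' := Fin.last k) (a' := 0) (by simp; omega), hlast]
  · rfl

end BlockWord

lemma exists_quiescent_outside {c c' : ℤ → S} (hc : {i | c i ≠ q}.Finite)
    (hc' : {i | c' i ≠ q}.Finite) (m : ℕ) :
    ∃ (L : ℤ) (k : ℕ), 1 ≤ k ∧ ∀ j, j ≤ L + m ∨ L + k ≤ j → c j = q ∧ c' j = q := by
  obtain ⟨B, hB⟩ := ((hc.union hc').image Int.natAbs).bddAbove
  refine ⟨-B - m - 1, 2 * B + m + 2, by omega, fun j hj => ?_⟩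
  have hjB : ¬ j.natAbs ≤ B := by omega
  by_contra h
  exact hjB (hB ⟨j, by simpa [or_iff_not_and_not] using h, rfl⟩)

lemma snoc_shift_eq_window {k m : ℕ} (u : ℤ → S) (L : ℤ) (i : Fin k) :
    (Fin.snoc (fun t : Fin (m + 1) => u (L + i.castSucc + t)) (u (L + i.succ + Fin.last m)) :
      Fin (m + 2) → S) = fun a : Fin (m + 2) => u (L + i + a) := by
  funext a
  induction a using Fin.lastCases with
  | last => rw [Fin.snoc_last]; congr 1; simp; ring
  | cast a => rw [Fin.snoc_castSucc]; simp

variable [Fintype S] [DecidableEq S] {m : ℕ} {δ : (Fin (m + 2) → S) → EuclideanSpace ℂ S}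

theorem fst_eq_snd_of_orthogonalColumns (hq : ∀ x, δ (fun _ => q) x = if x = q then 1 else 0)
    (horth : OrthogonalColumns q δ) {k : ℕ}
    {p : Fin (k + 1) → (Fin (m + 1) → S) × (Fin (m + 1) → S)}
    (hzero : p 0 = (fun _ => q, fun _ => q)) (hlast : p (Fin.last k) = (fun _ => q, fun _ => q))
    (hedge : ∀ i : Fin k, IsProductEdge δ (p i.castSucc) (p i.succ)) :
    (fun s => (p s).1) = fun s => (p s).2 := by
  have hf₁ : ∀ i : Fin k, IsDeBruijnEdge (p i.castSucc).1 (p i.succ).1 := fun i => (hedge i).1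
  have hf₂ : ∀ i : Fin k, IsDeBruijnEdge (p i.castSucc).2 (p i.succ).2 := fun i => (hedge i).2.1
  have h0₁ : (p 0).1 = fun _ => q := by rw [hzero]
  have h0₂ : (p 0).2 = fun _ => q := by rw [hzero]
  have hl₁ : (p (Fin.last k)).1 = fun _ => q := by rw [hlast]
  have hl₂ : (p (Fin.last k)).2 = fun _ => q := by rw [hlast]
  have hword : blockWord q (fun s => (p s).1) = blockWord q (fun s => (p s).2) := by
    by_contra hne
    have hsum := horth ⟨blockWord q fun s => (p s).1, blockWord_finite⟩
      ⟨blockWord q fun s => (p s).2, blockWord_finite⟩ fun h => hne (congr_arg Subtype.val h)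
    rw [tsum_conj_evolutionEntry_mul_eq_prod_fin hq 0 k
      (fun i hi => blockWord_window_of_lt_or_le hf₁ h0₁ hl₁ (by simpa using hi))
      (fun i hi => blockWord_window_of_lt_or_le hf₂ h0₂ hl₂ (by simpa using hi))] at hsum
    obtain ⟨i, -, hi⟩ := prod_eq_zero_iff.1 hsum
    simp only [zero_add, blockWord_window (f := fun s => (p s).1) hf₁ hl₁,
      blockWord_window (f := fun s => (p s).2) hf₂ hl₂] at hi
    exact (hedge i).2.2 hi
  funext s a
  calc (p s).1 a = blockWord q (fun s => (p s).1) (s + a) :=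
      apply_eq_blockWord (f := fun s => (p s).1) hf₁ hl₁ s a
    _ = blockWord q (fun s => (p s).2) (s + a) := by rw [hword]
    _ = (p s).2 a := (apply_eq_blockWord (f := fun s => (p s).2) hf₂ hl₂ s a).symm

theorem orthogonalColumns_of_diagonalQCycles
    (hq : ∀ x, δ (fun _ => q) x = if x = q then 1 else 0) (hcyc : DiagonalQCycles q δ) :
    OrthogonalColumns q δ := by
  intro c c' hne
  obtain ⟨L, k, hk, hout⟩ := exists_quiescent_outside c.2 c'.2 m
  have window_quiescent (u : ℤ → S) (hu : ∀ j, j ≤ L + m ∨ L + k ≤ j → u j = q) (i : ℤ)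
      (hi : i < L ∨ L + k ≤ i) : (fun a : Fin (m + 2) => u (i + a)) = fun _ => q :=
    funext fun a => hu _ (by omega)
  rw [tsum_conj_evolutionEntry_mul_eq_prod_fin hq L k
    (window_quiescent _ fun j hj => (hout j hj).1) (window_quiescent _ fun j hj => (hout j hj).2)]
  by_contra hprod
  -- the two configurations, read through a sliding window, form a `q`-cycle of `H_A`
  let p : Fin (k + 1) → (Fin (m + 1) → S) × (Fin (m + 1) → S) := fun s =>
    (fun t => c.1 (L + s + t), fun t => c'.1 (L + s + t))
  have hdiag := hcyc k p hk
    (Prod.ext (funext fun t => (hout _ (by simp; omega)).1)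
      (funext fun t => (hout _ (by simp; omega)).2))
    (Prod.ext (funext fun t => (hout _ (Or.inr (by simp))).1)
      (funext fun t => (hout _ (Or.inr (by simp))).2))
    fun i => ⟨fun a => congr_arg c.1 (by simp; ring), fun a => congr_arg c'.1 (by simp; ring), by
      rw [snoc_shift_eq_window, snoc_shift_eq_window]
      exact prod_ne_zero_iff.1 hprod i (mem_univ _)⟩
  refine hne (Subtype.ext (funext fun j => ?_))
  by_cases hj : L ≤ j ∧ j ≤ L + k
  · have hcol := congr_fun (congr_fun hdiag ⟨(j - L).toNat, by omega⟩) 0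
    simp only [p, Fin.val_zero, Nat.cast_zero, add_zero] at hcol
    rwa [show L + ((j - L).toNat : ℤ) = j by omega] at hcol
  · rw [(hout j (by omega)).1, (hout j (by omega)).2]

end LQCA

theorem orthogonal_columns_iff_diagonal_qcycles_general {S : Type*} [Fintype S] [DecidableEq S]
    (q : S) (m : ℕ) (δ : (Fin (m + 2) → S) → EuclideanSpace ℂ S)
    (hq : ∀ x, δ (fun _ => q) x = if x = q then 1 else 0) :
    (∀ c c' : {c : ℤ → S // {i | c i ≠ q}.Finite}, c ≠ c' →
        (∑' d : {c : ℤ → S // {i | c i ≠ q}.Finite},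
            (starRingEnd ℂ) (∏ᶠ i : ℤ, δ (fun a => c.1 (i + (a : ℤ))) (d.1 i)) *
              ∏ᶠ i : ℤ, δ (fun a => c'.1 (i + (a : ℤ))) (d.1 i)) = 0)
      ↔ ∀ (k : ℕ) (p : Fin (k + 1) → ((Fin (m + 1) → S) × (Fin (m + 1) → S))),
          1 ≤ k →
          p 0 = (fun _ => q, fun _ => q) →
          p (Fin.last k) = (fun _ => q, fun _ => q) →
          (∀ i : Fin k,
            (∀ a : Fin m, (p i.castSucc).1 a.succ = (p i.succ).1 a.castSucc) ∧
            (∀ a : Fin m, (p i.castSucc).2 a.succ = (p i.succ).2 a.castSucc) ∧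
            inner (𝕜 := ℂ)
              (δ (Fin.snoc (p i.castSucc).1 ((p i.succ).1 (Fin.last m))))
              (δ (Fin.snoc (p i.castSucc).2 ((p i.succ).2 (Fin.last m)))) ≠ 0) →
          (fun s => (p s).1) = (fun s => (p s).2) :=
  ⟨fun horth _ _ _ hzero hlast hedge =>
      LQCA.fst_eq_snd_of_orthogonalColumns hq horth hzero hlast hedge,
    LQCA.orthogonalColumns_of_diagonalQCycles hq⟩

/-- Lemma 4: for a simple LQCA with neighborhood size `r = m + 2 ≥ 2`, the
columns of the time evolution operator are pairwise orthogonal iff every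
`q`-cycle of the product graph `H_A` (vertices `Σ^{r-1} × Σ^{r-1}`, an edge
`(x₁z₁,x₂z₂) → (z₁y₁,z₂y₂)` whenever `⟨δ(x₁z₁y₁), δ(x₂z₂y₂)⟩ ≠ 0`) has equal
first and second coordinate projections. -/
theorem orthogonal_columns_iff_diagonal_qcycles {S : Type*} [Fintype S] [DecidableEq S]
    (q : S) (m : ℕ) (δ : (Fin (m + 2) → S) → EuclideanSpace ℂ S)
    (hq : ∀ x, δ (fun _ => q) x = if x = q then 1 else 0)
    (hnz : ∀ w, δ w ≠ 0) :
    (∀ c c' : {c : ℤ → S // {i | c i ≠ q}.Finite}, c ≠ c' →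
        (∑' d : {c : ℤ → S // {i | c i ≠ q}.Finite},
            (starRingEnd ℂ) (∏ᶠ i : ℤ, δ (fun a => c.1 (i + (a : ℤ))) (d.1 i)) *
              ∏ᶠ i : ℤ, δ (fun a => c'.1 (i + (a : ℤ))) (d.1 i)) = 0)
      ↔ ∀ (k : ℕ) (p : Fin (k + 1) → ((Fin (m + 1) → S) × (Fin (m + 1) → S))),
          1 ≤ k →
          p 0 = (fun _ => q, fun _ => q) →
          p (Fin.last k) = (fun _ => q, fun _ => q) →
          (∀ i : Fin k,
            (∀ a : Fin m, (p i.castSucc).1 a.succ = (p i.succ).1 a.castSucc) ∧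
            (∀ a : Fin m, (p i.castSucc).2 a.succ = (p i.succ).2 a.castSucc) ∧
            inner (𝕜 := ℂ)
              (δ (Fin.snoc (p i.castSucc).1 ((p i.succ).1 (Fin.last m))))
              (δ (Fin.snoc (p i.castSucc).2 ((p i.succ).2 (Fin.last m)))) ≠ 0) →
          (fun s => (p s).1) = (fun s => (p s).2) :=
  orthogonal_columns_iff_diagonal_qcycles_general q m δ hq
end

section
/- Let Σ = Σ₁ × ⋯ × Σ_r be a product of finite nonempty sets and define the permutation rule δ_p : Σ^r → Σ by δ_p((x_{1,1},…,x_{1,r}), …, (x_{r,1},…,x_{r,r})) = (x_{1,1}, x_{2,2}, …, x_{r,r}). Then the global map Δ_p on finitely supported configurations c : ℤ → Σ (with quiescent state q satisfying δ_p(q,…,q) = q), defined by Δ_p(c)(i) = δ_p(c_{i+N}) for a neighborhood N of size r, is a bijection on the set of finitely supported configurations, and consequently the induced operator U_p with U_p(d,c) = 1 if d = Δ_p(c) and 0 otherwise is unitary on ℓ² over configurations. -/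
open scoped Classical

/-- The classical permutation part of a partitioned LQCA: over the state set
`Σ = Σ₁ × ⋯ × Σ_r`, the global map `Δ_p(c)(i)(j) = c(i + N j)(j)` is a
bijection on the set of finitely supported configurations, and the induced
0-1 operator `U_p(d,c) = [d = Δ_p(c)]` is unitary on `ℓ²` over
configurations. -/
theorem partitioned_classical_part_unitary {r : ℕ}
    (S : Fin r → Type*) [∀ j, Fintype (S j)] [∀ j, Nonempty (S j)]
    (q : ∀ j, S j) (N : Fin r → ℤ) (hN : StrictMono N) :
    Set.BijOn (fun (c : ℤ → ∀ j, S j) => fun i j => c (i + N j) j)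
        {c | {i | c i ≠ q}.Finite} {c | {i | c i ≠ q}.Finite}
      ∧
    (∀ c d : {c : ℤ → ∀ j, S j // {i | c i ≠ q}.Finite},
      ((∑' e : {c : ℤ → ∀ j, S j // {i | c i ≠ q}.Finite},
          (starRingEnd ℂ)
              (if e.1 = (fun i j => c.1 (i + N j) j) then (1 : ℂ) else 0) *
            (if e.1 = (fun i j => d.1 (i + N j) j) then (1 : ℂ) else 0))
        = if c = d then 1 else 0) ∧
      ((∑' e : {c : ℤ → ∀ j, S j // {i | c i ≠ q}.Finite},
          (if c.1 = (fun i j => e.1 (i + N j) j) then (1 : ℂ) else 0) *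
            (starRingEnd ℂ)
              (if d.1 = (fun i j => e.1 (i + N j) j) then (1 : ℂ) else 0))
        = if c = d then 1 else 0)) := by
  let Δ : (ℤ → ∀ j, S j) → (ℤ → ∀ j, S j) := fun c i j => c (i + N j) j
  let Δ' : (ℤ → ∀ j, S j) → (ℤ → ∀ j, S j) := fun c i j => c (i - N j) j
  have hli : ∀ c, Δ' (Δ c) = c := by
    intro c; funext i j; simp [Δ, Δ', sub_add_cancel]
  have hri : ∀ c, Δ (Δ' c) = c := by
    intro c; funext i j; simp [Δ, Δ', add_sub_cancel_right]
  have hfin : ∀ c : ℤ → ∀ j, S j, {i | c i ≠ q}.Finite → {i | Δ c i ≠ q}.Finite := by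
    intro c hc
    refine Set.Finite.subset (Set.Finite.biUnion Set.finite_univ
      (fun j (_ : j ∈ (Set.univ : Set (Fin r))) => hc.image (· - N j))) ?_
    intro i hi
    obtain ⟨j, hj⟩ := Function.ne_iff.mp hi
    refine Set.mem_biUnion (Set.mem_univ j) ⟨i + N j, ?_, by simp⟩
    exact fun h => hj (by simp [Δ, h])
  have hfin' : ∀ c : ℤ → ∀ j, S j, {i | c i ≠ q}.Finite → {i | Δ' c i ≠ q}.Finite := by
    intro c hc
    refine Set.Finite.subset (Set.Finite.biUnion Set.finite_univ
      (fun j (_ : j ∈ (Set.univ : Set (Fin r))) => hc.image (· + N j))) ?_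
    intro i hi
    obtain ⟨j, hj⟩ := Function.ne_iff.mp hi
    refine Set.mem_biUnion (Set.mem_univ j) ⟨i - N j, ?_, by simp⟩
    exact fun h => hj (by simp [Δ', h])
  have hinj : Function.Injective Δ := Function.LeftInverse.injective hli
  have hinj' : Function.Injective Δ' := Function.LeftInverse.injective hri
  have hconj : ∀ (P : Prop) [Decidable P],
      (starRingEnd ℂ) (if P then (1 : ℂ) else 0) = if P then 1 else 0 := by
    intro P _; split <;> simp
  have key : ∀ (Φ : (ℤ → ∀ j, S j) → (ℤ → ∀ j, S j)),
      Function.Injective Φ →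
      (∀ c : ℤ → ∀ j, S j, {i | c i ≠ q}.Finite → {i | Φ c i ≠ q}.Finite) →
      ∀ (a b : {c : ℤ → ∀ j, S j // {i | c i ≠ q}.Finite}),
      (∑' e : {c : ℤ → ∀ j, S j // {i | c i ≠ q}.Finite},
        (if e.1 = Φ a.1 then (1 : ℂ) else 0) * (if e.1 = Φ b.1 then (1 : ℂ) else 0))
        = if a = b then 1 else 0 := by
    intro Φ hΦinj hΦfin a b
    by_cases hab : a = b
    · subst hab
      rw [if_pos rfl]
      have h1 : ∀ e : {c : ℤ → ∀ j, S j // {i | c i ≠ q}.Finite},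
          (if e.1 = Φ a.1 then (1 : ℂ) else 0) * (if e.1 = Φ a.1 then (1 : ℂ) else 0)
          = if e = (⟨Φ a.1, hΦfin a.1 a.2⟩ : {c : ℤ → ∀ j, S j // {i | c i ≠ q}.Finite})
              then 1 else 0 := by
        intro e
        by_cases h : e.1 = Φ a.1
        · have he : e = (⟨Φ a.1, hΦfin a.1 a.2⟩ : {c : ℤ → ∀ j, S j // {i | c i ≠ q}.Finite}) :=
            Subtype.ext h
          simp [h, he]
        · have he : e ≠ (⟨Φ a.1, hΦfin a.1 a.2⟩ : {c : ℤ → ∀ j, S j // {i | c i ≠ q}.Finite}) :=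
            fun hh => h (congrArg Subtype.val hh)
          simp [h, he]
      rw [tsum_congr h1, tsum_ite_eq]
    · rw [if_neg hab]
      have h1 : ∀ e : {c : ℤ → ∀ j, S j // {i | c i ≠ q}.Finite},
          (if e.1 = Φ a.1 then (1 : ℂ) else 0) * (if e.1 = Φ b.1 then (1 : ℂ) else 0) = 0 := by
        intro e
        by_cases h : e.1 = Φ a.1
        · have : ¬ (e.1 = Φ b.1) := by
            intro h2
            exact hab (Subtype.ext (hΦinj (h ▸ h2 ▸ rfl : Φ a.1 = Φ b.1)))
          simp [this]
        · simp [h]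
      rw [tsum_congr h1]
      try exact tsum_zero
  refine ⟨⟨fun c hc => hfin c hc, hinj.injOn, fun c hc => ⟨Δ' c, hfin' c hc, hri c⟩⟩, ?_⟩
  intro c d
  constructor
  · have step : ∀ e : {c : ℤ → ∀ j, S j // {i | c i ≠ q}.Finite},
        (starRingEnd ℂ) (if e.1 = (fun i j => c.1 (i + N j) j) then (1 : ℂ) else 0) *
          (if e.1 = (fun i j => d.1 (i + N j) j) then (1 : ℂ) else 0)
        = (if e.1 = Δ c.1 then (1 : ℂ) else 0) * (if e.1 = Δ d.1 then (1 : ℂ) else 0) := by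
      intro e; rw [hconj]
    rw [tsum_congr step]
    exact key Δ hinj hfin c d
  · have step : ∀ e : {c : ℤ → ∀ j, S j // {i | c i ≠ q}.Finite},
        (if c.1 = (fun i j => e.1 (i + N j) j) then (1 : ℂ) else 0) *
          (starRingEnd ℂ) (if d.1 = (fun i j => e.1 (i + N j) j) then (1 : ℂ) else 0)
        = (if e.1 = Δ' c.1 then (1 : ℂ) else 0) * (if e.1 = Δ' d.1 then (1 : ℂ) else 0) := by
      intro e
      rw [hconj]
      have h1 : (c.1 = (fun i j => e.1 (i + N j) j)) = (e.1 = Δ' c.1) := by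
        apply propext
        constructor
        · intro h; have : c.1 = Δ e.1 := h; rw [this, hli]
        · intro h; show c.1 = Δ e.1; rw [h, hri]
      have h2 : (d.1 = (fun i j => e.1 (i + N j) j)) = (e.1 = Δ' d.1) := by
        apply propext
        constructor
        · intro h; have : d.1 = Δ e.1 := h; rw [this, hli]
        · intro h; show d.1 = Δ e.1; rw [h, hri]
      rw [if_congr (Eq.to_iff h1) rfl rfl, if_congr (Eq.to_iff h2) rfl rfl]
    rw [tsum_congr step]
    exact key Δ' hinj' hfin' c d
end

section
/- Let A be a partitioned LQCA, with local transition δ = δ_Q ∘ δ_p where δ_p is the classical permutation part and δ_Q : Σ → ℂ^Σ is the quantum part with local transition matrix Q(y,x) = δ_Q(x)(y). Then the following are equivalent: (1) Q is unitary; (2) the time evolution operator U_A preserves the ℓ² norm; (3) U_A is unitary. -/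
/-!
The permutation part `Δ_p` only relabels basis configurations, so everything reduces to the
trivial LQCA with amplitude `⟨e|U_{A_Q}|a⟩ = ∏ᶠ i, δ_Q(a_i)(e_i)`. Because `δ_Q(q)` is the basis
vector at `q`, the sum over `e` of a product of such amplitudes only sees configurations supported
in a finite window, where it factorises cell by cell. Hence the Gram matrix of the columns of
`U_{A_Q}` is a finite product of entries of `Q*Q`, and that of the rows one of entries of `QQ*`
(unitarity forces `δ_Q(x)(q) = 0` for `x ≠ q`). On single-cell configurations the Gram matrix is
`Q*Q` itself, so `Q` is unitary iff the columns of `U_A` are orthonormal, which for an operator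
whose columns are finitely supported is norm preservation, by polarization.
-/

open scoped Classical

open Function ComplexConjugate

namespace PLQCA

section Kernel

variable {α β γ : Type*} (K : α → β → ℂ)

def NormPreserving : Prop :=
  ∀ f : α →₀ ℂ, ∑' e, ‖∑ a ∈ f.support, f a * K a e‖ ^ 2 = ∑ a ∈ f.support, ‖f a‖ ^ 2

def OrthonormalColumns [DecidableEq α] : Prop :=
  ∀ a b, ∑' e, conj (K a e) * K b e = if a = b then 1 else 0

def OrthonormalRows [DecidableEq β] : Prop :=
  ∀ b b', ∑' a, K a b * conj (K a b') = if b = b' then 1 else 0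

variable {K}

lemma ofReal_tsum_norm_sq_sum_mul (hK : ∀ a, (support (K a)).Finite) (s : Finset α)
    (f : α → ℂ) :
    ((∑' e, ‖∑ a ∈ s, f a * K a e‖ ^ 2 : ℝ) : ℂ) =
      ∑ a ∈ s, ∑ b ∈ s, conj (f a) * f b * ∑' e, conj (K a e) * K b e := by
  have hsum (a b : α) : Summable fun e => conj (K a e) * K b e :=
    summable_of_hasFiniteSupport ((hK b).subset fun e he => right_ne_zero_of_mul he)
  calc ((∑' e, ‖∑ a ∈ s, f a * K a e‖ ^ 2 : ℝ) : ℂ)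
      = ∑' e, ∑ a ∈ s, ∑ b ∈ s, conj (f a) * f b * (conj (K a e) * K b e) := by
        rw [Complex.ofReal_tsum]
        refine tsum_congr fun e => ?_
        rw [Complex.ofReal_pow, ← Complex.conj_mul', map_sum, Finset.sum_mul_sum]
        refine Finset.sum_congr rfl fun a _ => Finset.sum_congr rfl fun b _ => ?_
        rw [map_mul]
        ring
    _ = _ := by
        rw [Summable.tsum_finsetSum fun a _ => summable_sum fun b _ => (hsum a b).mul_left _]
        refine Finset.sum_congr rfl fun a _ => ?_
        rw [Summable.tsum_finsetSum fun b _ => (hsum a b).mul_left _]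
        exact Finset.sum_congr rfl fun b _ => (hsum a b).tsum_mul_left _

lemma NormPreserving.sum_sum_mul_tsum (hK : ∀ a, (support (K a)).Finite)
    (hnorm : NormPreserving K) {s : Finset α} {f : α →₀ ℂ} (hfs : f.support ⊆ s) :
    ∑ a ∈ s, ∑ b ∈ s, conj (f a) * f b * ∑' e, conj (K a e) * K b e =
      ∑ a ∈ s, conj (f a) * f a := by
  have hzero {a : α} (ha : a ∉ f.support) : f a = 0 := Finsupp.notMem_support_iff.mp ha
  have hterm (e : β) : ∑ a ∈ s, f a * K a e = ∑ a ∈ f.support, f a * K a e :=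
    (Finset.sum_subset hfs fun a _ ha => by rw [hzero ha, zero_mul]).symm
  have hnormsq : ∑ a ∈ s, conj (f a) * f a = ((∑ a ∈ f.support, ‖f a‖ ^ 2 : ℝ) : ℂ) := by
    push_cast
    simp_rw [Complex.conj_mul']
    exact (Finset.sum_subset hfs fun a _ ha => by simp [hzero ha]).symm
  rw [← ofReal_tsum_norm_sq_sum_mul hK, hnormsq, ← hnorm f]
  simp_rw [hterm]

theorem normPreserving_iff_orthonormalColumns [DecidableEq α]
    (hK : ∀ a, (support (K a)).Finite) : NormPreserving K ↔ OrthonormalColumns K := by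
  constructor
  · intro hnorm
    have hdiag (a : α) : ∑' e, conj (K a e) * K a e = 1 := by
      simpa using hnorm.sum_sum_mul_tsum hK (s := {a}) (f := Finsupp.single a 1)
        Finsupp.support_single_subset
    -- polarization with the test vectors `a + t b` for `t = 1` and `t = I`
    have hpair {a b : α} (hab : a ≠ b) (t : ℂ) :
        t * ∑' e, conj (K a e) * K b e + conj t * ∑' e, conj (K b e) * K a e = 0 := by
      have hsupp : (Finsupp.single a 1 + Finsupp.single b t).support ⊆ {a, b} := by
        rw [Finset.insert_eq]
        exact Finsupp.support_add.trans
          (Finset.union_subset_union Finsupp.support_single_subset Finsupp.support_single_subset)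
      have := hnorm.sum_sum_mul_tsum hK hsupp
      simp [Finset.sum_pair hab, Finsupp.single_apply, hab, hab.symm, hdiag] at this
      linear_combination this
    intro a b
    by_cases hab : a = b
    · simp [hab, hdiag]
    · rw [if_neg hab]
      have h1 := hpair hab 1
      have hI := hpair hab Complex.I
      simp only [map_one, Complex.conj_I, one_mul] at h1 hI
      linear_combination (1 / 2 : ℂ) * h1 - (Complex.I / 2) * hI +
        ((∑' e, conj (K a e) * K b e) - ∑' e, conj (K b e) * K a e) / 2 * Complex.I_sq
  · intro horth f
    apply Complex.ofReal_injective
    rw [ofReal_tsum_norm_sq_sum_mul hK]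
    simp only [horth _ _, mul_ite, mul_one, mul_zero, Finset.sum_ite_eq, Complex.conj_mul']
    push_cast
    exact Finset.sum_congr rfl fun a ha => if_pos ha

lemma orthonormalColumns_comp_equiv_iff [DecidableEq α] [DecidableEq γ] (P : γ ≃ α) :
    OrthonormalColumns (fun c => K (P c)) ↔ OrthonormalColumns K := by
  refine ⟨fun h a b => ?_, fun h c d => ?_⟩
  · simpa using h (P.symm a) (P.symm b)
  · simpa [P.injective.eq_iff] using h (P c) (P d)

lemma orthonormalRows_comp_equiv_iff [DecidableEq β] (P : γ ≃ α) :
    OrthonormalRows (fun c => K (P c)) ↔ OrthonormalRows K := by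
  refine forall₂_congr fun b b' => ?_
  rw [P.tsum_eq fun a => K a b * conj (K a b')]

end Kernel

abbrev Config (σ : Type*) (q : σ) : Type _ := {c : ℤ → σ // {i | c i ≠ q}.Finite}

namespace Config

variable {σ : Type*} (q : σ)

def extend (F : Finset ℤ) (v : F → σ) : Config σ q :=
  ⟨fun i => if h : i ∈ F then v ⟨i, h⟩ else q,
    F.finite_toSet.subset fun _ hi => by_contra fun h => hi (dif_neg h)⟩

lemma extend_injective (F : Finset ℤ) : Injective (extend q F) := fun v w hvw =>
  funext fun i => by simpa [extend] using congr_fun (congr_arg Subtype.val hvw) i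

lemma mem_range_extend {F : Finset ℤ} {e : Config σ q} (he : ∀ i ∉ F, e.1 i = q) :
    e ∈ Set.range (extend q F) :=
  ⟨fun i => e.1 i, Subtype.ext <| funext fun i => by
    by_cases hi : i ∈ F
    · simp [extend, hi]
    · simp [extend, hi, he i hi]⟩

def single (x : σ) : Config σ q :=
  ⟨update (fun _ => q) 0 x,
    (Set.finite_singleton 0).subset fun _ hi => by_contra fun h => hi (update_of_ne h _ _)⟩

lemma single_injective : Injective (single q) := fun x y hxy => by
  simpa [single] using congr_fun (congr_arg Subtype.val hxy) 0

lemma single_apply_zero (x : σ) : (single q x).1 0 = x := by simp [single]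

lemma single_apply_of_notMem {i : ℤ} (hi : i ∉ ({0} : Finset ℤ)) (x : σ) :
    (single q x).1 i = q := by
  simp [single, Finset.notMem_singleton.mp hi]

lemma apply_eq_of_notMem_union {q : σ} (a b : Config σ q) :
    ∀ i ∉ (a.2.union b.2).toFinset, a.1 i = q ∧ b.1 i = q := by
  simp [not_or]

lemma eq_iff_forall_mem {q : σ} {F : Finset ℤ} {a b : Config σ q} (ha : ∀ i ∉ F, a.1 i = q)
    (hb : ∀ i ∉ F, b.1 i = q) : a = b ↔ ∀ i ∈ F, a.1 i = b.1 i := by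
  refine ⟨fun h _ _ => h ▸ rfl, fun h => Subtype.ext <| funext fun i => ?_⟩
  by_cases hi : i ∈ F
  · exact h i hi
  · rw [ha i hi, hb i hi]

lemma hasFiniteMulSupport {φ : σ → σ → ℂ} (hφ : φ q q = 1) (a e : Config σ q) :
    HasFiniteMulSupport fun i => φ (a.1 i) (e.1 i) :=
  (a.2.union e.2).subset fun i hi => by
    by_contra h
    simp only [Set.mem_union, Set.mem_ofPred_eq, not_or, not_not] at h
    exact hi (by simp only [h.1, h.2, hφ])

variable [Fintype σ] [DecidableEq σ]

-- Only configurations supported in `F` contribute, and these are parametrized by `F → σ`.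
lemma tsum_finprod_eq_prod_sum (g : ℤ → σ → ℂ) (F : Finset ℤ)
    (hg : ∀ i ∉ F, ∀ x, g i x = if x = q then 1 else 0) :
    ∑' e : Config σ q, ∏ᶠ i, g i (e.1 i) = ∏ i ∈ F, ∑ x, g i x := by
  have hsupp : support (fun e : Config σ q => ∏ᶠ i, g i (e.1 i)) ⊆ Set.range (extend q F) := by
    intro e he
    refine mem_range_extend q fun i hi => by_contra fun hei => he ?_
    refine finprod_eq_zero _ i (by rw [hg i hi, if_neg hei]) ?_
    exact ((F.finite_toSet).union e.2).subset fun k hk => by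
      by_contra h
      simp only [Set.mem_union, Finset.mem_coe, Set.mem_ofPred_eq, not_or, not_not] at h
      exact hk (show g k (e.1 k) = 1 by rw [h.2, hg k h.1, if_pos rfl])
  rw [← (extend_injective q F).tsum_eq hsupp, tsum_fintype, ← Finset.prod_coe_sort,
    Fintype.prod_sum]
  refine Fintype.sum_congr _ _ fun v => ?_
  rw [finprod_eq_prod_of_mulSupport_subset (s := F), ← Finset.prod_coe_sort]
  · simp [extend]
  · intro i hi
    by_contra hiF
    rw [Finset.mem_coe] at hiF
    exact hi (by simp [extend, hiF, hg i hiF])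

end Config

section Amplitude

variable {σ : Type*} {q : σ} {δ : σ → σ → ℂ}

noncomputable def amplitude (δ : σ → σ → ℂ) (a e : Config σ q) : ℂ := ∏ᶠ i, δ (a.1 i) (e.1 i)

lemma conj_amplitude_mul (hδ : δ q q = 1) (a b e : Config σ q) :
    conj (amplitude δ a e) * amplitude δ b e =
      ∏ᶠ i, conj (δ (a.1 i) (e.1 i)) * δ (b.1 i) (e.1 i) := by
  have hconj : conj (δ q q) = 1 := by rw [hδ, map_one]
  rw [amplitude, amplitude, map_finprod _ (Config.hasFiniteMulSupport q hδ a e),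
    finprod_mul_distrib (Config.hasFiniteMulSupport q (φ := fun x y => conj (δ x y)) hconj a e)
      (Config.hasFiniteMulSupport q hδ b e)]

lemma amplitude_mul_conj (hδ : δ q q = 1) (a b e : Config σ q) :
    amplitude δ e a * conj (amplitude δ e b) =
      ∏ᶠ i, δ (e.1 i) (a.1 i) * conj (δ (e.1 i) (b.1 i)) := by
  have hconj : conj (δ q q) = 1 := by rw [hδ, map_one]
  rw [amplitude, amplitude, map_finprod _ (Config.hasFiniteMulSupport q hδ e b),
    finprod_mul_distrib (Config.hasFiniteMulSupport q hδ e a)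
      (Config.hasFiniteMulSupport q (φ := fun x y => conj (δ x y)) hconj e b)]

lemma star_mul_self_apply [Fintype σ] (u v : σ) :
    (star (Matrix.of fun y x => δ x y) * Matrix.of fun y x => δ x y) u v =
      ∑ x, conj (δ u x) * δ v x := by
  simp [Matrix.mul_apply]

lemma mul_star_self_apply [Fintype σ] (u v : σ) :
    ((Matrix.of fun y x => δ x y) * star (Matrix.of fun y x => δ x y)) u v =
      ∑ x, δ x u * conj (δ x v) := by
  simp [Matrix.mul_apply]

variable [Fintype σ] [DecidableEq σ]

lemma finite_support_amplitude (hq : ∀ x, δ q x = if x = q then 1 else 0) (a : Config σ q) :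
    (support (amplitude δ a)).Finite := by
  refine (Set.finite_range (Config.extend q a.2.toFinset)).subset fun e he => ?_
  refine Config.mem_range_extend q fun i hi => by_contra fun hei => he ?_
  have hai : a.1 i = q := by simpa using hi
  exact finprod_eq_zero _ i (by rw [hai, hq, if_neg hei])
    (Config.hasFiniteMulSupport q (by rw [hq, if_pos rfl]) a e)

lemma tsum_conj_amplitude_mul (hq : ∀ x, δ q x = if x = q then 1 else 0) {F : Finset ℤ}
    {a b : Config σ q} (ha : ∀ i ∉ F, a.1 i = q) (hb : ∀ i ∉ F, b.1 i = q) :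
    ∑' e, conj (amplitude δ a e) * amplitude δ b e =
      ∏ i ∈ F, ∑ x, conj (δ (a.1 i) x) * δ (b.1 i) x := by
  simp_rw [conj_amplitude_mul (δ := δ) (by rw [hq, if_pos rfl]) a b]
  refine Config.tsum_finprod_eq_prod_sum q (fun i x => conj (δ (a.1 i) x) * δ (b.1 i) x) F
    fun i hi x => ?_
  rw [ha i hi, hb i hi, hq]
  split_ifs <;> simp

lemma tsum_amplitude_mul_conj (hq : ∀ x, δ x q = if x = q then 1 else 0) {F : Finset ℤ}
    {a b : Config σ q} (ha : ∀ i ∉ F, a.1 i = q) (hb : ∀ i ∉ F, b.1 i = q) :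
    ∑' e, amplitude δ e a * conj (amplitude δ e b) =
      ∏ i ∈ F, ∑ x, δ x (a.1 i) * conj (δ x (b.1 i)) := by
  simp_rw [amplitude_mul_conj (δ := δ) (by rw [hq, if_pos rfl]) a b]
  refine Config.tsum_finprod_eq_prod_sum q (fun i x => δ x (a.1 i) * conj (δ x (b.1 i))) F
    fun i hi x => ?_
  rw [ha i hi, hb i hi, hq]
  split_ifs <;> simp

lemma apply_quiescent_of_mem_unitaryGroup (hq : ∀ x, δ q x = if x = q then 1 else 0)
    (hu : Matrix.of (fun y x => δ x y) ∈ Matrix.unitaryGroup σ ℂ) (x : σ) :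
    δ x q = if x = q then 1 else 0 := by
  have := congr_fun (congr_fun (Matrix.mem_unitaryGroup_iff'.mp hu) q) x
  simpa [star_mul_self_apply, Matrix.one_apply, hq, eq_comm] using this

theorem orthonormalColumns_amplitude_iff (hq : ∀ x, δ q x = if x = q then 1 else 0) :
    OrthonormalColumns (amplitude δ : Config σ q → Config σ q → ℂ) ↔
      Matrix.of (fun y x => δ x y) ∈ Matrix.unitaryGroup σ ℂ := by
  rw [Matrix.mem_unitaryGroup_iff']
  constructor
  · intro h
    ext u v
    have := h (Config.single q u) (Config.single q v)
    rw [tsum_conj_amplitude_mul hq (fun i hi => Config.single_apply_of_notMem q hi u)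
      (fun i hi => Config.single_apply_of_notMem q hi v), Finset.prod_singleton] at this
    simpa [Config.single_apply_zero, (Config.single_injective q).eq_iff, star_mul_self_apply,
      Matrix.one_apply] using this
  · intro hu a b
    have hab := Config.apply_eq_of_notMem_union a b
    have hcol (u v : σ) : ∑ x, conj (δ u x) * δ v x = if u = v then 1 else 0 := by
      rw [← star_mul_self_apply, hu, Matrix.one_apply]
    rw [tsum_conj_amplitude_mul hq (fun i hi => (hab i hi).1) (fun i hi => (hab i hi).2)]
    simp only [hcol, Finset.prod_boole,
      Config.eq_iff_forall_mem (fun i hi => (hab i hi).1) (fun i hi => (hab i hi).2)]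

theorem orthonormalRows_amplitude (hq : ∀ x, δ q x = if x = q then 1 else 0)
    (hu : Matrix.of (fun y x => δ x y) ∈ Matrix.unitaryGroup σ ℂ) :
    OrthonormalRows (amplitude δ : Config σ q → Config σ q → ℂ) := by
  intro a b
  have hab := Config.apply_eq_of_notMem_union a b
  have hrow (u v : σ) : ∑ x, δ x u * conj (δ x v) = if u = v then 1 else 0 := by
    rw [← mul_star_self_apply, Matrix.mem_unitaryGroup_iff.mp hu, Matrix.one_apply]
  rw [tsum_amplitude_mul_conj (apply_quiescent_of_mem_unitaryGroup hq hu)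
    (fun i hi => (hab i hi).1) (fun i hi => (hab i hi).2)]
  simp only [hrow, Finset.prod_boole,
    Config.eq_iff_forall_mem (fun i hi => (hab i hi).1) (fun i hi => (hab i hi).2)]

end Amplitude

section PartitionShift

variable {r : ℕ} {S : Fin r → Type*}

def trackShift (N : Fin r → ℤ) (c : ℤ → ∀ j, S j) : ℤ → ∀ j, S j := fun i j => c (i + N j) j

lemma finite_trackShift (q : ∀ j, S j) (N : Fin r → ℤ) {c : ℤ → ∀ j, S j}
    (hc : {i | c i ≠ q}.Finite) : {i | trackShift N c i ≠ q}.Finite :=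
  (Set.finite_iUnion fun j => hc.preimage (add_left_injective (N j)).injOn).subset fun i hi => by
    obtain ⟨j, hj⟩ := Function.ne_iff.mp hi
    exact Set.mem_iUnion.mpr ⟨j, fun h => hj (by simp [trackShift, h])⟩

def partitionShift (q : ∀ j, S j) (N : Fin r → ℤ) :
    Config (∀ j, S j) q ≃ Config (∀ j, S j) q where
  toFun c := ⟨trackShift N c.1, finite_trackShift q N c.2⟩
  invFun c := ⟨trackShift (-N) c.1, finite_trackShift q (-N) c.2⟩
  left_inv c := Subtype.ext <| funext fun i => funext fun j => by simp [trackShift]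
  right_inv c := Subtype.ext <| funext fun i => funext fun j => by simp [trackShift]

end PartitionShift

end PLQCA

open PLQCA in
theorem plqca_wellformed_iff_unitary_general {r : ℕ}
    (S : Fin r → Type*) [∀ j, Fintype (S j)]
    [∀ j, DecidableEq (S j)]
    (q : ∀ j, S j) (N : Fin r → ℤ)
    (δQ : (∀ j, S j) → EuclideanSpace ℂ (∀ j, S j))
    (hq : ∀ x, δQ q x = if x = q then 1 else 0) :
    (((Matrix.of fun y x => δQ x y) ∈ Matrix.unitaryGroup (∀ j, S j) ℂ)
        ↔ (∀ f : {c : ℤ → ∀ j, S j // {i | c i ≠ q}.Finite} →₀ ℂ,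
            (∑' d : {c : ℤ → ∀ j, S j // {i | c i ≠ q}.Finite},
                ‖∑ c ∈ f.support, f c *
                    ∏ᶠ i : ℤ, δQ (fun j => c.1 (i + N j) j) (d.1 i)‖ ^ 2)
              = ∑ c ∈ f.support, ‖f c‖ ^ 2))
      ∧
    ((∀ f : {c : ℤ → ∀ j, S j // {i | c i ≠ q}.Finite} →₀ ℂ,
        (∑' d : {c : ℤ → ∀ j, S j // {i | c i ≠ q}.Finite},
            ‖∑ c ∈ f.support, f c *
                ∏ᶠ i : ℤ, δQ (fun j => c.1 (i + N j) j) (d.1 i)‖ ^ 2)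
          = ∑ c ∈ f.support, ‖f c‖ ^ 2)
        ↔ (∀ c d : {c : ℤ → ∀ j, S j // {i | c i ≠ q}.Finite},
            ((∑' e : {c : ℤ → ∀ j, S j // {i | c i ≠ q}.Finite},
                (starRingEnd ℂ)
                    (∏ᶠ i : ℤ, δQ (fun j => c.1 (i + N j) j) (e.1 i)) *
                  ∏ᶠ i : ℤ, δQ (fun j => d.1 (i + N j) j) (e.1 i))
              = if c = d then 1 else 0) ∧
            ((∑' e : {c : ℤ → ∀ j, S j // {i | c i ≠ q}.Finite},
                (∏ᶠ i : ℤ, δQ (fun j => e.1 (i + N j) j) (c.1 i)) *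
                  (starRingEnd ℂ)
                    (∏ᶠ i : ℤ, δQ (fun j => e.1 (i + N j) j) (d.1 i)))
              = if c = d then 1 else 0))) := by
  let P := partitionShift q N
  have hcols := orthonormalColumns_amplitude_iff (δ := fun x y => δQ x y) hq
  have hwell : NormPreserving (fun c => amplitude (fun x y => δQ x y) (P c)) ↔
      (Matrix.of fun y x => δQ x y) ∈ Matrix.unitaryGroup (∀ j, S j) ℂ :=
    (normPreserving_iff_orthonormalColumns fun c =>
        finite_support_amplitude (δ := fun x y => δQ x y) hq (P c)).trans
      ((orthonormalColumns_comp_equiv_iff P).trans hcols)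
  refine ⟨hwell.symm, hwell.trans ⟨fun hu c d => ⟨?_, ?_⟩, fun h => hcols.mp ?_⟩⟩
  · exact (orthonormalColumns_comp_equiv_iff P).mpr (hcols.mpr hu) c d
  · exact (orthonormalRows_comp_equiv_iff P).mpr (orthonormalRows_amplitude hq hu) c d
  · exact (orthonormalColumns_comp_equiv_iff P).mp fun c d => (h c d).1

/-- Watrous' theorem for partitioned LQCAs: with local transition
`δ = δ_Q ∘ δ_p` (classical permutation part `δ_p`, quantum part `δ_Q` with
local transition matrix `Q(y,x) = δ_Q(x)(y)`), the following are equivalent: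
(1) `Q` is unitary; (2) the time evolution operator `U_A` preserves the `ℓ²`
norm (of finitely supported superpositions of configurations); (3) `U_A` is
unitary. -/
theorem plqca_wellformed_iff_unitary {r : ℕ}
    (S : Fin r → Type*) [∀ j, Fintype (S j)] [∀ j, Nonempty (S j)]
    [∀ j, DecidableEq (S j)]
    (q : ∀ j, S j) (N : Fin r → ℤ) (hN : StrictMono N)
    (δQ : (∀ j, S j) → EuclideanSpace ℂ (∀ j, S j))
    (hq : ∀ x, δQ q x = if x = q then 1 else 0) :
    (((Matrix.of fun y x => δQ x y) ∈ Matrix.unitaryGroup (∀ j, S j) ℂ)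
        ↔ (∀ f : {c : ℤ → ∀ j, S j // {i | c i ≠ q}.Finite} →₀ ℂ,
            (∑' d : {c : ℤ → ∀ j, S j // {i | c i ≠ q}.Finite},
                ‖∑ c ∈ f.support, f c *
                    ∏ᶠ i : ℤ, δQ (fun j => c.1 (i + N j) j) (d.1 i)‖ ^ 2)
              = ∑ c ∈ f.support, ‖f c‖ ^ 2))
      ∧
    ((∀ f : {c : ℤ → ∀ j, S j // {i | c i ≠ q}.Finite} →₀ ℂ,
        (∑' d : {c : ℤ → ∀ j, S j // {i | c i ≠ q}.Finite},
            ‖∑ c ∈ f.support, f c *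
                ∏ᶠ i : ℤ, δQ (fun j => c.1 (i + N j) j) (d.1 i)‖ ^ 2)
          = ∑ c ∈ f.support, ‖f c‖ ^ 2)
        ↔ (∀ c d : {c : ℤ → ∀ j, S j // {i | c i ≠ q}.Finite},
            ((∑' e : {c : ℤ → ∀ j, S j // {i | c i ≠ q}.Finite},
                (starRingEnd ℂ)
                    (∏ᶠ i : ℤ, δQ (fun j => c.1 (i + N j) j) (e.1 i)) *
                  ∏ᶠ i : ℤ, δQ (fun j => d.1 (i + N j) j) (e.1 i))
              = if c = d then 1 else 0) ∧
            ((∑' e : {c : ℤ → ∀ j, S j // {i | c i ≠ q}.Finite},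
                (∏ᶠ i : ℤ, δQ (fun j => e.1 (i + N j) j) (c.1 i)) *
                  (starRingEnd ℂ)
                    (∏ᶠ i : ℤ, δQ (fun j => e.1 (i + N j) j) (d.1 i)))
              = if c = d then 1 else 0))) :=
  plqca_wellformed_iff_unitary_general S q N δQ hq
end
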